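/- arXiv:1904.08358 — 10 statements merged into one kernel-verified Lean document; each statement's English description precedes it below -/
import Mathlib

section
/- Consider the feasible set F = {x = (x_1^f, x_1^b, x_2^f, x_2^b) ∈ ℝ⁴ : all components nonnegative, x_1^f + x_1^b = q_1, x_2^f + x_2^b = q_2}. If J_1^f, J_1^b, J_2^f, J_2^b : ℝ⁴ → ℝ are continuous functions, each nondecreasing with respect to the componentwise partial order on ℝ⁴, then there exists x ∈ F such that for each i ∈ {1,2}: x_i^f·(J_i^f(x) − J_i^b(x)) ≤ 0 and x_i^b·(J_i^b(x) − J_i^f(x)) ≤ 0 (i.e., x is a Wardrop equilibrium). -/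
open Finset Filter Topology

namespace WardropAux


/-- parity indicator of an edge having labels {0,1} -/
def eE (x y : Fin 3) : ZMod 2 := if (x = 0 ∧ y = 1) ∨ (x = 1 ∧ y = 0) then 1 else 0

lemma eE_comm (x y : Fin 3) : eE x y = eE y x := by revert x y; decide

lemma eE_tri (x y z : Fin 3) (h : ¬ ((x = 0 ∨ y = 0 ∨ z = 0) ∧ (x = 1 ∨ y = 1 ∨ z = 1) ∧
    (x = 2 ∨ y = 2 ∨ z = 2))) : eE x y + eE x z + eE y z = 0 := by
  revert h; revert x y z; decide

lemma eE_no0 (x y : Fin 3) (hx : x ≠ 0) (hy : y ≠ 0) : eE x y = 0 := by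
  revert hx hy; revert x y; decide

lemma eE_no1 (x y : Fin 3) (hx : x ≠ 1) (hy : y ≠ 1) : eE x y = 0 := by
  revert hx hy; revert x y; decide

def gI (x : Fin 3) : ZMod 2 := if x = 1 then 1 else 0

lemma eE_no2 (x y : Fin 3) (hx : x ≠ 2) (hy : y ≠ 2) : eE x y = gI y - gI x := by
  revert hx hy; revert x y; decide

lemma gI_ne1 (x : Fin 3) (hx : x ≠ 1) : gI x = 0 := by revert hx; revert x; decide

/-- Sperner-type lemma on the triangulated square grid. -/
lemma sperner_square (n : ℕ) (ℓ : ℕ → ℕ → Fin 3)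
    (h1 : ∀ j ≤ n, ℓ 0 j = 1)
    (h2 : ∀ j ≤ n, ℓ n j ≠ 1)
    (h3 : ∀ i ≤ n, ℓ i 0 ≠ 0)
    (h4 : ∀ i ≤ n, ℓ i n ≠ 2) :
    ∃ i j, i < n ∧ j < n ∧ ∃ p q r : ℕ × ℕ,
      ((p.1 = i ∨ p.1 = i+1) ∧ (p.2 = j ∨ p.2 = j+1)) ∧
      ((q.1 = i ∨ q.1 = i+1) ∧ (q.2 = j ∨ q.2 = j+1)) ∧
      ((r.1 = i ∨ r.1 = i+1) ∧ (r.2 = j ∨ r.2 = j+1)) ∧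
      ℓ p.1 p.2 = 0 ∧ ℓ q.1 q.2 = 1 ∧ ℓ r.1 r.2 = 2 := by
  by_contra hcon
  push_neg at hcon
  have hnotri : ∀ i j, i < n → j < n → ∀ a b c : ℕ × ℕ,
      ((a.1 = i ∨ a.1 = i+1) ∧ (a.2 = j ∨ a.2 = j+1)) →
      ((b.1 = i ∨ b.1 = i+1) ∧ (b.2 = j ∨ b.2 = j+1)) →
      ((c.1 = i ∨ c.1 = i+1) ∧ (c.2 = j ∨ c.2 = j+1)) →
      eE (ℓ a.1 a.2) (ℓ b.1 b.2) + eE (ℓ a.1 a.2) (ℓ c.1 c.2)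
        + eE (ℓ b.1 b.2) (ℓ c.1 c.2) = 0 := by
    intro i j hi hj a b c ha hb hc
    apply eE_tri
    rintro ⟨H0, H1, H2⟩
    have w0 : ∃ p : ℕ × ℕ, ((p.1 = i ∨ p.1 = i+1) ∧ (p.2 = j ∨ p.2 = j+1)) ∧ ℓ p.1 p.2 = 0 := by
      rcases H0 with h | h | h
      exacts [⟨a, ha, h⟩, ⟨b, hb, h⟩, ⟨c, hc, h⟩]
    have w1 : ∃ p : ℕ × ℕ, ((p.1 = i ∨ p.1 = i+1) ∧ (p.2 = j ∨ p.2 = j+1)) ∧ ℓ p.1 p.2 = 1 := by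
      rcases H1 with h | h | h
      exacts [⟨a, ha, h⟩, ⟨b, hb, h⟩, ⟨c, hc, h⟩]
    have w2 : ∃ p : ℕ × ℕ, ((p.1 = i ∨ p.1 = i+1) ∧ (p.2 = j ∨ p.2 = j+1)) ∧ ℓ p.1 p.2 = 2 := by
      rcases H2 with h | h | h
      exacts [⟨a, ha, h⟩, ⟨b, hb, h⟩, ⟨c, hc, h⟩]
    obtain ⟨p, hp, hp0⟩ := w0
    obtain ⟨q, hq, hq1⟩ := w1
    obtain ⟨r, hr, hr2⟩ := w2
    exact hcon i j hi hj p q r hp hq hr hp0 hq1 hr2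
  -- horizontal and vertical edge indicators
  set H : ℕ → ℕ → ZMod 2 := fun i j => eE (ℓ i j) (ℓ (i+1) j) with hHdef
  set V : ℕ → ℕ → ZMod 2 := fun i j => eE (ℓ i j) (ℓ i (j+1)) with hVdef
  -- total parity sum over all triangles
  have hS0 : (∑ i ∈ range n, ∑ j ∈ range n,
      ((H i (j+1) - H i j) + (V (i+1) j - V i j))) = 0 := by
    apply Finset.sum_eq_zero
    intro i hi
    apply Finset.sum_eq_zero
    intro j hj
    rw [mem_range] at hi hj
    have t1 := hnotri i j hi hj (i, j) (i+1, j) (i, j+1)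
      ⟨Or.inl rfl, Or.inl rfl⟩ ⟨Or.inr rfl, Or.inl rfl⟩ ⟨Or.inl rfl, Or.inr rfl⟩
    have t2 := hnotri i j hi hj (i+1, j) (i+1, j+1) (i, j+1)
      ⟨Or.inr rfl, Or.inl rfl⟩ ⟨Or.inr rfl, Or.inr rfl⟩ ⟨Or.inl rfl, Or.inr rfl⟩
    simp only at t1 t2
    have e1 : eE (ℓ (i+1) (j+1)) (ℓ i (j+1)) = H i (j+1) := by
      rw [hHdef]; exact eE_comm _ _
    have t1' : H i j + V i j + eE (ℓ (i+1) j) (ℓ i (j+1)) = 0 := t1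
    have t2' : V (i+1) j + eE (ℓ (i+1) j) (ℓ i (j+1)) + H i (j+1) = 0 := by
      rw [hVdef, hHdef]; rw [hHdef] at e1; rw [← e1]; exact t2
    have htwo : (2 : ZMod 2) = 0 := rfl
    linear_combination t1' + t2'
      - (H i j + V i j + eE (ℓ (i+1) j) (ℓ i (j+1))) * htwo
  -- telescope the sum
  have tele1 : ∀ i ∈ range n, (∑ j ∈ range n, (H i (j+1) - H i j)) = H i n - H i 0 :=
    fun i _ => Finset.sum_range_sub (fun j => H i j) n
  have tele2 : ∀ j ∈ range n, (∑ i ∈ range n, (V (i+1) j - V i j)) = V n j - V 0 j :=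
    fun j _ => Finset.sum_range_sub (fun i => V i j) n
  have hsplit : (∑ i ∈ range n, ∑ j ∈ range n, ((H i (j+1) - H i j) + (V (i+1) j - V i j)))
      = (∑ i ∈ range n, ∑ j ∈ range n, (H i (j+1) - H i j))
        + (∑ i ∈ range n, ∑ j ∈ range n, (V (i+1) j - V i j)) := by
    rw [← Finset.sum_add_distrib]
    exact Finset.sum_congr rfl fun i _ => by rw [← Finset.sum_add_distrib]
  have hswap : (∑ i ∈ range n, ∑ j ∈ range n, (V (i+1) j - V i j))
      = ∑ j ∈ range n, ∑ i ∈ range n, (V (i+1) j - V i j) := Finset.sum_comm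
  rw [hsplit, hswap] at hS0
  rw [Finset.sum_congr rfl tele1, Finset.sum_congr rfl tele2] at hS0
  -- evaluate boundary edges
  have hH0 : ∀ i ∈ range n, H i n - H i 0 = gI (ℓ (i+1) n) - gI (ℓ i n) := by
    intro i hi
    rw [mem_range] at hi
    have hHn : H i n = gI (ℓ (i+1) n) - gI (ℓ i n) :=
      eE_no2 _ _ (h4 i hi.le) (h4 (i+1) hi)
    have hHb : H i 0 = 0 := eE_no0 _ _ (h3 i hi.le) (h3 (i+1) hi)
    rw [hHn, hHb, sub_zero]
  have hV0 : ∀ j ∈ range n, V n j - V 0 j = 0 := by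
    intro j hj
    rw [mem_range] at hj
    have hVn : V n j = 0 := eE_no1 _ _ (h2 j hj.le) (h2 (j+1) hj)
    have hVl : V 0 j = 0 := by
      show eE (ℓ 0 j) (ℓ 0 (j+1)) = 0
      rw [h1 j hj.le, h1 (j+1) hj]; decide
    rw [hVn, hVl, sub_zero]
  rw [Finset.sum_congr rfl hH0, Finset.sum_congr rfl hV0] at hS0
  rw [Finset.sum_range_sub (fun i => gI (ℓ i n)) n] at hS0
  simp only [Finset.sum_const_zero, add_zero] at hS0
  rw [gI_ne1 _ (h2 n le_rfl), h1 n le_rfl] at hS0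
  simp [gI] at hS0


/-- Poincaré–Miranda theorem on the unit square. -/
theorem miranda_unit (A B : ℝ × ℝ → ℝ) (hA : Continuous A) (hB : Continuous B)
    (ha0 : ∀ s ∈ Set.Icc (0:ℝ) 1, A (0, s) ≤ 0)
    (ha1 : ∀ s ∈ Set.Icc (0:ℝ) 1, 0 ≤ A (1, s))
    (hb0 : ∀ t ∈ Set.Icc (0:ℝ) 1, B (t, 0) ≤ 0)
    (hb1 : ∀ t ∈ Set.Icc (0:ℝ) 1, 0 ≤ B (t, 1)) :
    ∃ p ∈ Set.Icc (0:ℝ) 1 ×ˢ Set.Icc (0:ℝ) 1, A p = 0 ∧ B p = 0 := by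
  set K : Set (ℝ × ℝ) := Set.Icc (0:ℝ) 1 ×ˢ Set.Icc (0:ℝ) 1 with hK
  have key : ∀ k : ℕ, ∃ P Q R : ℝ × ℝ, (P ∈ K ∧ Q ∈ K ∧ R ∈ K) ∧
      (|Q.1 - P.1| ≤ 1/((k:ℝ)+1) ∧ |Q.2 - P.2| ≤ 1/((k:ℝ)+1) ∧
       |R.1 - P.1| ≤ 1/((k:ℝ)+1) ∧ |R.2 - P.2| ≤ 1/((k:ℝ)+1)) ∧
      (-(1/((k:ℝ)+1)) ≤ A P ∧ -(1/((k:ℝ)+1)) ≤ B P ∧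
       A Q ≤ 1/((k:ℝ)+1) ∧ B R ≤ 1/((k:ℝ)+1)) := by
    intro k
    set m : ℝ := (k:ℝ) + 1 with hm
    have hm0 : 0 < m := by positivity
    have hcast : ((k+1 : ℕ) : ℝ) = m := by push_cast [hm]; ring
    have hzero : ((0:ℕ):ℝ)/m = 0 := by simp
    have hone : ((k+1 : ℕ) : ℝ)/m = 1 := by rw [hcast, div_self hm0.ne']
    have hcoord : ∀ i : ℕ, i ≤ k+1 → (i:ℝ)/m ∈ Set.Icc (0:ℝ) 1 := by
      intro i hi
      constructor
      · positivity
      · rw [div_le_one hm0, ← hcast]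
        exact_mod_cast hi
    set ℓ : ℕ → ℕ → Fin 3 := fun i j =>
      if A ((i:ℝ)/m, (j:ℝ)/m) + (2*((i:ℝ)/m) - 1)/m < 0 then 1
      else if B ((i:ℝ)/m, (j:ℝ)/m) + (2*((j:ℝ)/m) - 1)/m < 0 then 2 else 0 with hℓ
    have hneg : (2*(0:ℝ) - 1)/m < 0 := by
      apply div_neg_of_neg_of_pos
      · norm_num
      · exact hm0
    have hpos : (0:ℝ) < (2*(1:ℝ) - 1)/m := by
      rw [show (2*(1:ℝ)-1) = 1 by ring]; positivity
    have h1 : ∀ j ≤ k+1, ℓ 0 j = 1 := by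
      intro j hj
      have h := ha0 _ (hcoord j hj)
      show (if A (((0:ℕ):ℝ)/m, (j:ℝ)/m) + (2*(((0:ℕ):ℝ)/m) - 1)/m < 0 then (1:Fin 3)
        else if B (((0:ℕ):ℝ)/m, (j:ℝ)/m) + (2*((j:ℝ)/m) - 1)/m < 0 then 2 else 0) = 1
      rw [hzero, if_pos (by linarith)]
    have h2 : ∀ j ≤ k+1, ℓ (k+1) j ≠ 1 := by
      intro j hj
      have h := ha1 _ (hcoord j hj)
      show (if A (((k+1:ℕ):ℝ)/m, (j:ℝ)/m) + (2*(((k+1:ℕ):ℝ)/m) - 1)/m < 0 then (1:Fin 3)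
        else if B (((k+1:ℕ):ℝ)/m, (j:ℝ)/m) + (2*((j:ℝ)/m) - 1)/m < 0 then 2 else 0) ≠ 1
      rw [hone, if_neg (by push_neg; linarith)]
      split_ifs <;> decide
    have h3 : ∀ i ≤ k+1, ℓ i 0 ≠ 0 := by
      intro i hi
      have h := hb0 _ (hcoord i hi)
      show (if A ((i:ℝ)/m, ((0:ℕ):ℝ)/m) + (2*((i:ℝ)/m) - 1)/m < 0 then (1:Fin 3)
        else if B ((i:ℝ)/m, ((0:ℕ):ℝ)/m) + (2*(((0:ℕ):ℝ)/m) - 1)/m < 0 then 2 else 0) ≠ 0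
      rw [hzero]
      split_ifs with hA' hB'
      · decide
      · decide
      · exact absurd (by linarith : B ((i:ℝ)/m, 0) + (2*(0:ℝ)-1)/m < 0) hB'
    have h4 : ∀ i ≤ k+1, ℓ i (k+1) ≠ 2 := by
      intro i hi
      have h := hb1 _ (hcoord i hi)
      show (if A ((i:ℝ)/m, ((k+1:ℕ):ℝ)/m) + (2*((i:ℝ)/m) - 1)/m < 0 then (1:Fin 3)
        else if B ((i:ℝ)/m, ((k+1:ℕ):ℝ)/m) + (2*(((k+1:ℕ):ℝ)/m) - 1)/m < 0 then 2 else 0) ≠ 2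
      rw [hone]
      split_ifs with hA' hB'
      · decide
      · exact absurd hB' (by push_neg; linarith)
      · decide
    obtain ⟨i, j, hi, hj, p, q, r, hp, hq, hr, hp0, hq1, hr2⟩ :=
      sperner_square (k+1) ℓ h1 h2 h3 h4
    have hble : ∀ a : ℕ, (a = i ∨ a = i+1) → a ≤ k+1 := by
      rintro a (rfl | rfl) <;> omega
    have hble' : ∀ a : ℕ, (a = j ∨ a = j+1) → a ≤ k+1 := by
      rintro a (rfl | rfl) <;> omega
    have hup : (p.1:ℝ)/m ∈ Set.Icc (0:ℝ) 1 := hcoord _ (hble _ hp.1)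
    have hvp : (p.2:ℝ)/m ∈ Set.Icc (0:ℝ) 1 := hcoord _ (hble' _ hp.2)
    have huq : (q.1:ℝ)/m ∈ Set.Icc (0:ℝ) 1 := hcoord _ (hble _ hq.1)
    have hvq : (q.2:ℝ)/m ∈ Set.Icc (0:ℝ) 1 := hcoord _ (hble' _ hq.2)
    have hur : (r.1:ℝ)/m ∈ Set.Icc (0:ℝ) 1 := hcoord _ (hble _ hr.1)
    have hvr : (r.2:ℝ)/m ∈ Set.Icc (0:ℝ) 1 := hcoord _ (hble' _ hr.2)
    have hminv : 1/m = 1/((k:ℝ)+1) := by rw [hm]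
    have close : ∀ a b c : ℕ, (a = c ∨ a = c+1) → (b = c ∨ b = c+1) →
        |(a:ℝ)/m - (b:ℝ)/m| ≤ 1/((k:ℝ)+1) := by
      intro a b c ha hb
      rw [← hminv, div_sub_div_same, abs_div, abs_of_pos hm0]
      refine (div_le_div_iff_of_pos_right hm0).mpr ?_
      rw [abs_le]
      rcases ha with rfl | rfl <;> rcases hb with rfl | rfl <;>
        constructor <;> push_cast <;> linarith
    -- extract label information
    have hPA : -(1/((k:ℝ)+1)) ≤ A ((p.1:ℝ)/m, (p.2:ℝ)/m) ∧
        -(1/((k:ℝ)+1)) ≤ B ((p.1:ℝ)/m, (p.2:ℝ)/m) := by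
      have hp0' : (if A ((p.1:ℝ)/m, (p.2:ℝ)/m) + (2*((p.1:ℝ)/m) - 1)/m < 0 then (1:Fin 3)
        else if B ((p.1:ℝ)/m, (p.2:ℝ)/m) + (2*((p.2:ℝ)/m) - 1)/m < 0 then 2 else 0) = 0 := hp0
      split_ifs at hp0' with c1 c2
      · exact absurd hp0' (by decide)
      · exact absurd hp0' (by decide)
      · push_neg at c1 c2
        rw [← hminv]
        constructor
        · have hd : (2*((p.1:ℝ)/m)-1)/m ≤ 1/m := by
            gcongr
            linarith [hup.2]
          linarith
        · have hd : (2*((p.2:ℝ)/m)-1)/m ≤ 1/m := by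
            gcongr
            linarith [hvp.2]
          linarith
    have hQA : A ((q.1:ℝ)/m, (q.2:ℝ)/m) ≤ 1/((k:ℝ)+1) := by
      have hq1' : (if A ((q.1:ℝ)/m, (q.2:ℝ)/m) + (2*((q.1:ℝ)/m) - 1)/m < 0 then (1:Fin 3)
        else if B ((q.1:ℝ)/m, (q.2:ℝ)/m) + (2*((q.2:ℝ)/m) - 1)/m < 0 then 2 else 0) = 1 := hq1
      split_ifs at hq1' with c1 c2
      · rw [← hminv]
        have hd : (-(2*((q.1:ℝ)/m)-1))/m ≤ 1/m :=
          (div_le_div_iff_of_pos_right hm0).mpr (by linarith [huq.1])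
        have : (-(2*((q.1:ℝ)/m)-1))/m = -((2*((q.1:ℝ)/m)-1)/m) := by ring
        rw [this] at hd
        linarith
      · exact absurd hq1' (by decide)
      · exact absurd hq1' (by decide)
    have hRB : B ((r.1:ℝ)/m, (r.2:ℝ)/m) ≤ 1/((k:ℝ)+1) := by
      have hr2' : (if A ((r.1:ℝ)/m, (r.2:ℝ)/m) + (2*((r.1:ℝ)/m) - 1)/m < 0 then (1:Fin 3)
        else if B ((r.1:ℝ)/m, (r.2:ℝ)/m) + (2*((r.2:ℝ)/m) - 1)/m < 0 then 2 else 0) = 2 := hr2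
      split_ifs at hr2' with c1 c2
      · exact absurd hr2' (by decide)
      · rw [← hminv]
        have hd : (-(2*((r.2:ℝ)/m)-1))/m ≤ 1/m :=
          (div_le_div_iff_of_pos_right hm0).mpr (by linarith [hvr.1])
        have : (-(2*((r.2:ℝ)/m)-1))/m = -((2*((r.2:ℝ)/m)-1)/m) := by ring
        rw [this] at hd
        linarith
      · exact absurd hr2' (by decide)
    exact ⟨((p.1:ℝ)/m, (p.2:ℝ)/m), ((q.1:ℝ)/m, (q.2:ℝ)/m), ((r.1:ℝ)/m, (r.2:ℝ)/m),
      ⟨⟨hup, hvp⟩, ⟨huq, hvq⟩, ⟨hur, hvr⟩⟩,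
      ⟨close _ _ _ hq.1 hp.1, close _ _ _ hq.2 hp.2, close _ _ _ hr.1 hp.1, close _ _ _ hr.2 hp.2⟩,
      ⟨hPA.1, hPA.2, hQA, hRB⟩⟩
  choose P Q R hmem hclose hineq using key
  have hKc : IsCompact K := (isCompact_Icc).prod isCompact_Icc
  obtain ⟨z, hzK, φ, hφ, hconv⟩ := hKc.tendsto_subseq (fun k => (hmem k).1)
  have hphi : Tendsto φ atTop atTop := hφ.tendsto_atTop
  have hεtend : Tendsto (fun k => 1/((φ k : ℝ)+1)) atTop (𝓝 0) :=
    (tendsto_one_div_add_atTop_nhds_zero_nat).comp hphi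
  have hP1 : Tendsto (fun k => (P (φ k)).1) atTop (𝓝 z.1) :=
    (continuous_fst.tendsto z).comp hconv
  have hP2 : Tendsto (fun k => (P (φ k)).2) atTop (𝓝 z.2) :=
    (continuous_snd.tendsto z).comp hconv
  -- Q and R along the subsequence converge to z as well
  have coordconv : ∀ (W : ℕ → ℝ × ℝ),
      (∀ k, |(W k).1 - (P k).1| ≤ 1/((k:ℝ)+1)) →
      (∀ k, |(W k).2 - (P k).2| ≤ 1/((k:ℝ)+1)) →
      Tendsto (fun k => W (φ k)) atTop (𝓝 z) := by
    intro W hW1 hW2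
    have t1 : Tendsto (fun k => (W (φ k)).1) atTop (𝓝 z.1) := by
      apply tendsto_of_tendsto_of_tendsto_of_le_of_le
        (g := fun k => (P (φ k)).1 - 1/((φ k : ℝ)+1))
        (h := fun k => (P (φ k)).1 + 1/((φ k : ℝ)+1))
      · simpa using hP1.sub hεtend
      · simpa using hP1.add hεtend
      · intro k
        have := abs_le.mp (hW1 (φ k))
        linarith [this.1]
      · intro k
        have := abs_le.mp (hW1 (φ k))
        linarith [this.2]
    have t2 : Tendsto (fun k => (W (φ k)).2) atTop (𝓝 z.2) := by
      apply tendsto_of_tendsto_of_tendsto_of_le_of_le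
        (g := fun k => (P (φ k)).2 - 1/((φ k : ℝ)+1))
        (h := fun k => (P (φ k)).2 + 1/((φ k : ℝ)+1))
      · simpa using hP2.sub hεtend
      · simpa using hP2.add hεtend
      · intro k
        have := abs_le.mp (hW2 (φ k))
        linarith [this.1]
      · intro k
        have := abs_le.mp (hW2 (φ k))
        linarith [this.2]
    have := t1.prodMk_nhds t2
    simpa using this
  have hQconv : Tendsto (fun k => Q (φ k)) atTop (𝓝 z) :=
    coordconv Q (fun k => (hclose k).1) (fun k => (hclose k).2.1)
  have hRconv : Tendsto (fun k => R (φ k)) atTop (𝓝 z) :=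
    coordconv R (fun k => (hclose k).2.2.1) (fun k => (hclose k).2.2.2)
  -- limits of the inequalities
  have hAz0 : 0 ≤ A z := by
    have hup : Tendsto (fun k => A (P (φ k))) atTop (𝓝 (A z)) :=
      (hA.tendsto z).comp hconv
    have hlow : Tendsto (fun k => -(1/((φ k : ℝ)+1))) atTop (𝓝 (-0)) := hεtend.neg
    rw [neg_zero] at hlow
    exact le_of_tendsto_of_tendsto' hlow hup (fun k => (hineq (φ k)).1)
  have hBz0 : 0 ≤ B z := by
    have hup : Tendsto (fun k => B (P (φ k))) atTop (𝓝 (B z)) :=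
      (hB.tendsto z).comp hconv
    have hlow : Tendsto (fun k => -(1/((φ k : ℝ)+1))) atTop (𝓝 (-0)) := hεtend.neg
    rw [neg_zero] at hlow
    exact le_of_tendsto_of_tendsto' hlow hup (fun k => (hineq (φ k)).2.1)
  have hAz1 : A z ≤ 0 := by
    have hdn : Tendsto (fun k => A (Q (φ k))) atTop (𝓝 (A z)) :=
      (hA.tendsto z).comp hQconv
    exact le_of_tendsto_of_tendsto' hdn hεtend (fun k => (hineq (φ k)).2.2.1)
  have hBz1 : B z ≤ 0 := by
    have hdn : Tendsto (fun k => B (R (φ k))) atTop (𝓝 (B z)) :=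
      (hB.tendsto z).comp hRconv
    exact le_of_tendsto_of_tendsto' hdn hεtend (fun k => (hineq (φ k)).2.2.2)
  exact ⟨z, hzK, le_antisymm hAz1 hAz0, le_antisymm hBz1 hBz0⟩


end WardropAux

/-- Existence of a Wardrop equilibrium for the two-exit diverge with a
bifurcating lane, for arbitrary continuous, componentwise-nondecreasing cost functions.
A vector `x : Fin 4 → ℝ` encodes `(x₁ᶠ, x₁ᵇ, x₂ᶠ, x₂ᵇ) = (x 0, x 1, x 2, x 3)`. -/
theorem wardrop_existence_general
    (q1 q2 : ℝ) (hq1 : 0 ≤ q1) (hq2 : 0 ≤ q2) (hq : q1 + q2 = 1)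
    (J1f J1b J2f J2b : (Fin 4 → ℝ) → ℝ)
    (hJ1f_cont : Continuous J1f) (hJ1b_cont : Continuous J1b)
    (hJ2f_cont : Continuous J2f) (hJ2b_cont : Continuous J2b)
    (hJ1f_mono : Monotone J1f) (hJ1b_mono : Monotone J1b)
    (hJ2f_mono : Monotone J2f) (hJ2b_mono : Monotone J2b) :
    ∃ x : Fin 4 → ℝ,
      (∀ k, 0 ≤ x k) ∧ x 0 + x 1 = q1 ∧ x 2 + x 3 = q2 ∧
      x 0 * (J1f x - J1b x) ≤ 0 ∧ x 1 * (J1b x - J1f x) ≤ 0 ∧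
      x 2 * (J2f x - J2b x) ≤ 0 ∧ x 3 * (J2b x - J2f x) ≤ 0 := by
  classical
  set X : ℝ × ℝ → (Fin 4 → ℝ) := fun p => ![q1*p.1, q1 - q1*p.1, q2*p.2, q2 - q2*p.2] with hX
  have hXcont : Continuous X := by
    apply continuous_pi
    intro i
    fin_cases i
    · show Continuous fun a : ℝ × ℝ => q1 * a.1
      fun_prop
    · show Continuous fun a : ℝ × ℝ => q1 - q1 * a.1
      fun_prop
    · show Continuous fun a : ℝ × ℝ => q2 * a.2
      fun_prop
    · show Continuous fun a : ℝ × ℝ => q2 - q2 * a.2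
      fun_prop
  set F1 : ℝ × ℝ → ℝ := fun p => J1f (X p) - J1b (X p) with hF1
  set F2 : ℝ × ℝ → ℝ := fun p => J2f (X p) - J2b (X p) with hF2
  have hF1c : Continuous F1 := (hJ1f_cont.comp hXcont).sub (hJ1b_cont.comp hXcont)
  have hF2c : Continuous F2 := (hJ2f_cont.comp hXcont).sub (hJ2b_cont.comp hXcont)
  set A : ℝ × ℝ → ℝ := fun p => q1*p.1 - max 0 (min q1 (q1*p.1 - F1 p)) with hA
  set B : ℝ × ℝ → ℝ := fun p => q2*p.2 - max 0 (min q2 (q2*p.2 - F2 p)) with hB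
  have hAc : Continuous A := by
    apply Continuous.sub
    · fun_prop
    · exact continuous_const.max (continuous_const.min ((continuous_const.mul continuous_fst).sub hF1c))
  have hBc : Continuous B := by
    apply Continuous.sub
    · fun_prop
    · exact continuous_const.max (continuous_const.min ((continuous_const.mul continuous_snd).sub hF2c))
  have ha0 : ∀ s ∈ Set.Icc (0:ℝ) 1, A (0, s) ≤ 0 := by
    intro s _
    have h := le_max_left (0:ℝ) (min q1 (q1*(0:ℝ) - F1 (0, s)))
    simp only [hA]
    linarith [h]
  have ha1 : ∀ s ∈ Set.Icc (0:ℝ) 1, 0 ≤ A (1, s) := by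
    intro s _
    have h : max 0 (min q1 (q1*(1:ℝ) - F1 (1, s))) ≤ q1 := max_le hq1 (min_le_left _ _)
    simp only [hA]
    linarith [h]
  have hb0 : ∀ t ∈ Set.Icc (0:ℝ) 1, B (t, 0) ≤ 0 := by
    intro t _
    have h := le_max_left (0:ℝ) (min q2 (q2*(0:ℝ) - F2 (t, 0)))
    simp only [hB]
    linarith [h]
  have hb1 : ∀ t ∈ Set.Icc (0:ℝ) 1, 0 ≤ B (t, 1) := by
    intro t _
    have h : max 0 (min q2 (q2*(1:ℝ) - F2 (t, 1))) ≤ q2 := max_le hq2 (min_le_left _ _)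
    simp only [hB]
    linarith [h]
  obtain ⟨z, hzK, hAz, hBz⟩ := WardropAux.miranda_unit A B hAc hBc ha0 ha1 hb0 hb1
  obtain ⟨⟨hz10, hz11⟩, hz20, hz21⟩ := hzK
  set t : ℝ := q1 * z.1 with ht
  set s : ℝ := q2 * z.2 with hs
  have hx0 : X z 0 = t := rfl
  have hx1 : X z 1 = q1 - t := rfl
  have hx2 : X z 2 = s := rfl
  have hx3 : X z 3 = q2 - s := rfl
  have ht0 : 0 ≤ t := mul_nonneg hq1 hz10
  have ht1 : t ≤ q1 := by
    calc t = q1 * z.1 := ht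
    _ ≤ q1 * 1 := mul_le_mul_of_nonneg_left hz11 hq1
    _ = q1 := mul_one q1
  have hs0 : 0 ≤ s := mul_nonneg hq2 hz20
  have hs1 : s ≤ q2 := by
    calc s = q2 * z.2 := hs
    _ ≤ q2 * 1 := mul_le_mul_of_nonneg_left hz21 hq2
    _ = q2 := mul_one q2
  -- the fixed-point equations
  have hAeq : t = max 0 (min q1 (t - F1 z)) := by
    have : A z = 0 := hAz
    simp only [hA] at this
    rw [← ht] at this
    linarith [this]
  have hBeq : s = max 0 (min q2 (s - F2 z)) := by
    have : B z = 0 := hBz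
    simp only [hB] at this
    rw [← hs] at this
    linarith [this]
  -- complementarity for the two routes
  have compl : ∀ (tt qq : ℝ) (G : ℝ), 0 ≤ tt → tt ≤ qq →
      tt = max 0 (min qq (tt - G)) → tt * G ≤ 0 ∧ (qq - tt) * (-G) ≤ 0 := by
    intro tt qq G htt0 httq heq
    constructor
    · rcases eq_or_lt_of_le htt0 with h0 | h0
      · rw [← h0, zero_mul]
      · have hmin : min qq (tt - G) = tt := by
          rcases max_choice 0 (min qq (tt - G)) with hc | hc
          · rw [← heq] at hc; exact absurd hc.symm (ne_of_lt h0)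
          · rw [← heq] at hc; exact hc.symm
        have hle : tt ≤ tt - G := by
          conv_lhs => rw [← hmin]
          exact min_le_right _ _
        have hGle : G ≤ 0 := by linarith
        calc tt * G ≤ tt * 0 := mul_le_mul_of_nonneg_left hGle htt0
          _ = 0 := mul_zero tt
    · rcases eq_or_lt_of_le httq with h0 | h0
      · rw [h0, sub_self, zero_mul]
      · have hGge : 0 ≤ G := by
          by_contra hcon
          push_neg at hcon
          have h1 : tt < tt - G := by linarith
          have h2 : tt < min qq (tt - G) := lt_min h0 h1
          have h3 : min qq (tt - G) ≤ max 0 (min qq (tt - G)) := le_max_right _ _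
          rw [← heq] at h3
          linarith
        have : (qq - tt) * (-G) ≤ (qq - tt) * 0 :=
          mul_le_mul_of_nonneg_left (by linarith) (by linarith)
        simpa using this
  obtain ⟨hc1, hc2⟩ := compl t q1 (F1 z) ht0 ht1 hAeq
  obtain ⟨hc3, hc4⟩ := compl s q2 (F2 z) hs0 hs1 hBeq
  refine ⟨X z, ?_, ?_, ?_, ?_, ?_, ?_, ?_⟩
  · intro k
    fin_cases k
    · show (0:ℝ) ≤ X z 0
      rw [hx0]; exact ht0
    · show (0:ℝ) ≤ X z 1
      rw [hx1]; linarith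
    · show (0:ℝ) ≤ X z 2
      rw [hx2]; exact hs0
    · show (0:ℝ) ≤ X z 3
      rw [hx3]; linarith
  · rw [hx0, hx1]; ring
  · rw [hx2, hx3]; ring
  · rw [hx0]; exact hc1
  · rw [hx1]
    have : J1b (X z) - J1f (X z) = -(F1 z) := by simp only [hF1]; ring
    rw [this]; exact hc2
  · rw [hx2]; exact hc3
  · rw [hx3]
    have : J2b (X z) - J2f (X z) = -(F2 z) := by simp only [hF2]; ring
    rw [this]; exact hc4
end

section
/- In the bifurcating-lane diverge model with explicit costs, there exists at least one Wardrop equilibrium: a feasible flow vector x = (x_1^f, x_1^b, x_2^f, x_2^b) (componentwise nonnegative with x_i^f + x_i^b = q_i for i = 1,2) such that for each i ∈ {1,2}: x_i^f·(J_i^f(x) − J_i^b(x)) ≤ 0 and x_i^b·(J_i^b(x) − J_i^f(x)) ≤ 0. -/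
/-!
Given the other commodity's bridge flow `y ≥ 0`, the bridge-minus-free cost of commodity `i` is
affine and strictly increasing in its own bridge flow `b`, so its best response is the root of
that affine function clamped to `[0, q_i]`; it depends continuously on `y`. A fixed point of the
composite best response `[0, q_1] → [0, q_1]` (intermediate value theorem) is an equilibrium.
-/

open Set

lemma clamp_div_complementarity {D N q : ℝ} (hD : 0 < D) (hq : 0 ≤ q) :
    (q - max 0 (min q (N / D))) * (N - D * max 0 (min q (N / D))) ≤ 0 ∧
      max 0 (min q (N / D)) * (D * max 0 (min q (N / D)) - N) ≤ 0 := by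
  rcases le_total (N / D) 0 with hneg | hpos
  · have hN : N ≤ 0 := by simpa using (div_le_iff₀ hD).1 hneg
    rw [min_eq_right (hneg.trans hq), max_eq_left hneg]
    constructor <;> nlinarith
  rcases le_total q (N / D) with hbig | hmid
  · have hN : D * q ≤ N := (le_div_iff₀' hD).1 hbig
    rw [min_eq_left hbig, max_eq_right hq]
    constructor <;> nlinarith
  · have hroot : D * (N / D) = N := mul_div_cancel₀ N hD.ne'
    rw [min_eq_right hmid, max_eq_right hpos, hroot]
    simp

/-- Best response of a commodity with demand `q` and free-lane cost coefficient `C` to the other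
commodity's bridge flow `y`. -/
noncomputable def bridgeBestResponse (C Cb nu lam mu q y : ℝ) : ℝ :=
  max 0 (min q ((C * q - Cb * mu * y) / (C + Cb * lam + nu * y)))

section BestResponse

variable {C Cb nu lam mu q : ℝ}

lemma bridgeBestResponse_mem_Icc (hq : 0 ≤ q) (y : ℝ) :
    bridgeBestResponse C Cb nu lam mu q y ∈ Icc 0 q :=
  ⟨le_max_left _ _, max_le hq (min_le_left _ _)⟩

lemma continuousOn_bridgeBestResponse (hC : 0 < C) (hCb : 0 ≤ Cb) (hlam : 0 ≤ lam)
    (hnu : 0 ≤ nu) : ContinuousOn (bridgeBestResponse C Cb nu lam mu q) (Ici 0) := by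
  refine continuousOn_const.sup (continuousOn_const.inf ?_)
  refine ContinuousOn.div (by fun_prop) (by fun_prop) fun y (hy : 0 ≤ y) => ?_
  positivity

lemma bridgeBestResponse_isWardrop (hC : 0 < C) (hCb : 0 ≤ Cb) (hlam : 0 ≤ lam)
    (hnu : 0 ≤ nu) (hq : 0 ≤ q) {y b : ℝ} (hy : 0 ≤ y)
    (hb : bridgeBestResponse C Cb nu lam mu q y = b) :
    (q - b) * (C * (q - b) - (Cb * (lam * b + mu * y) + nu * b * y)) ≤ 0 ∧
      b * ((Cb * (lam * b + mu * y) + nu * b * y) - C * (q - b)) ≤ 0 := by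
  have hD : 0 < C + Cb * lam + nu * y := by positivity
  obtain ⟨hfree, hbridge⟩ := clamp_div_complementarity (N := C * q - Cb * mu * y) hD hq
  rw [← bridgeBestResponse, hb] at hfree hbridge
  constructor <;> linarith

end BestResponse

theorem wardrop_existence_explicit_general
    (C1f C2f Cb nu lam1 lam2 mu1 mu2 q1 q2 : ℝ)
    (hC1f : 0 < C1f) (hC2f : 0 < C2f) (hCb : 0 < Cb) (hnu : 0 < nu)
    (hlam1 : 0 < lam1) (hlam2 : 0 < lam2)
    (hq1 : 0 ≤ q1) (hq2 : 0 ≤ q2) :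
    ∃ x1f x1b x2f x2b : ℝ,
      0 ≤ x1f ∧ 0 ≤ x1b ∧ 0 ≤ x2f ∧ 0 ≤ x2b ∧
      x1f + x1b = q1 ∧ x2f + x2b = q2 ∧
      x1f * (C1f * x1f - (Cb * (lam1 * x1b + mu1 * x2b) + nu * x1b * x2b)) ≤ 0 ∧
      x1b * ((Cb * (lam1 * x1b + mu1 * x2b) + nu * x1b * x2b) - C1f * x1f) ≤ 0 ∧
      x2f * (C2f * x2f - (Cb * (lam2 * x2b + mu2 * x1b) + nu * x2b * x1b)) ≤ 0 ∧
      x2b * ((Cb * (lam2 * x2b + mu2 * x1b) + nu * x2b * x1b) - C2f * x2f) ≤ 0 := by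
  set br1 := bridgeBestResponse C1f Cb nu lam1 mu1 q1
  set br2 := bridgeBestResponse C2f Cb nu lam2 mu2 q2
  have hcont : ContinuousOn (br1 ∘ br2) (Icc 0 q1) :=
    (continuousOn_bridgeBestResponse hC1f hCb.le hlam1.le hnu.le).comp
      ((continuousOn_bridgeBestResponse hC2f hCb.le hlam2.le hnu.le).mono Icc_subset_Ici_self)
      fun y _ => (bridgeBestResponse_mem_Icc hq2 y).1
  obtain ⟨t, ht, hfix⟩ := exists_mem_Icc_isFixedPt_of_mapsTo hcont hq1
    fun y _ => bridgeBestResponse_mem_Icc hq1 (br2 y)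
  have hbr2 : br2 t ∈ Icc 0 q2 := bridgeBestResponse_mem_Icc hq2 t
  obtain ⟨h1f, h1b⟩ :=
    bridgeBestResponse_isWardrop hC1f hCb.le hlam1.le hnu.le hq1 hbr2.1 hfix
  obtain ⟨h2f, h2b⟩ :=
    bridgeBestResponse_isWardrop (b := br2 t) hC2f hCb.le hlam2.le hnu.le hq2 ht.1 rfl
  exact ⟨q1 - t, t, q2 - br2 t, br2 t, sub_nonneg.2 ht.2, ht.1, sub_nonneg.2 hbr2.2, hbr2.1,
    sub_add_cancel _ _, sub_add_cancel _ _, h1f, h1b, h2f, h2b⟩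

/-- Existence of a Wardrop equilibrium for the bifurcating-lane diverge
model with the explicit costs `J_i^f(x) = C_i^f·x_i^f` and
`J_i^b(x) = C^b·(λ_i·x_i^b + μ_i·x_j^b) + ν·x_i^b·x_j^b`. -/
theorem wardrop_existence_explicit
    (C1f C2f Cb nu lam1 lam2 mu1 mu2 q1 q2 : ℝ)
    (hC1f : 0 < C1f) (hC2f : 0 < C2f) (hCb : 0 < Cb) (hnu : 0 < nu)
    (hlam1 : 0 < lam1) (hlam1' : lam1 ≤ 1) (hlam2 : 0 < lam2) (hlam2' : lam2 ≤ 1)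
    (hmu1 : 0 < mu1) (hmu1' : mu1 ≤ 1) (hmu2 : 0 < mu2) (hmu2' : mu2 ≤ 1)
    (hq1 : 0 ≤ q1) (hq2 : 0 ≤ q2) (hq : q1 + q2 = 1) :
    ∃ x1f x1b x2f x2b : ℝ,
      0 ≤ x1f ∧ 0 ≤ x1b ∧ 0 ≤ x2f ∧ 0 ≤ x2b ∧
      x1f + x1b = q1 ∧ x2f + x2b = q2 ∧
      x1f * (C1f * x1f - (Cb * (lam1 * x1b + mu1 * x2b) + nu * x1b * x2b)) ≤ 0 ∧
      x1b * ((Cb * (lam1 * x1b + mu1 * x2b) + nu * x1b * x2b) - C1f * x1f) ≤ 0 ∧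
      x2f * (C2f * x2f - (Cb * (lam2 * x2b + mu2 * x1b) + nu * x2b * x1b)) ≤ 0 ∧
      x2b * ((Cb * (lam2 * x2b + mu2 * x1b) + nu * x2b * x1b) - C2f * x2f) ≤ 0 :=
  wardrop_existence_explicit_general C1f C2f Cb nu lam1 lam2 mu1 mu2 q1 q2 hC1f hC2f hCb hnu hlam1
    hlam2 hq1 hq2
end

section
/- A feasible flow vector x = (x_1^f, x_1^b, x_2^f, x_2^b) is a Wardrop equilibrium of the bifurcating-lane diverge model if and only if the pair y = (y_1, y_2) := (x_1^b, x_2^b) is a pure Nash equilibrium of the auxiliary two-player game; that is, for each i ≠ j in {1,2}, y_i minimizes u ↦ D_i(u, y_j)² over u ∈ [0, q_i]. -/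
/-!
Both conditions are statements about the sign of `D_i`, which is affine and strictly decreasing
in player `i`'s own back-lane flow. Wardrop's conditions say: if `D_i > 0` the front lane is
unused (`x_i^b = q_i`), and if `D_i < 0` the back lane is unused (`x_i^b = 0`). For a continuous,
strictly decreasing function on an interval, a point minimizes its square exactly when it is a
root, or an endpoint at which the function has the sign that pushes it out of the interval; by
the intermediate value theorem any other point can be improved.
-/

open Set

/-- The cost-difference function `D_i(u, v) = C_i^f·(q_i − u) − C^b·(λ_i·u + μ_i·v) − ν·u·v`,
which equals `J_i^f(x) − J_i^b(x)` when `x_i^b = u`, `x_i^f = q_i − u`, `x_j^b = v`. -/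
noncomputable def Dfun (Cf Cb nu lam mu q u v : ℝ) : ℝ :=
  Cf * (q - u) - Cb * (lam * u + mu * v) - nu * u * v

lemma mul_sub_nonpos_and_mul_sub_nonpos_iff {s t a b : ℝ} (hs : 0 ≤ s) (ht : 0 ≤ t) :
    (s * (a - b) ≤ 0 ∧ t * (b - a) ≤ 0) ↔ (b < a → s = 0) ∧ (a < b → t = 0) := by
  constructor
  · rintro ⟨hsab, htba⟩
    refine ⟨fun hba => ?_, fun hab => ?_⟩
    · exact le_antisymm (nonpos_of_mul_nonpos_left hsab (sub_pos.2 hba)) hs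
    · exact le_antisymm (nonpos_of_mul_nonpos_left htba (sub_pos.2 hab)) ht
  · rintro ⟨hs0, ht0⟩
    rcases lt_trichotomy a b with hab | rfl | hba
    · exact ⟨mul_nonpos_of_nonneg_of_nonpos hs (sub_neg.2 hab).le, by simp [ht0 hab]⟩
    · simp
    · exact ⟨by simp [hs0 hba], mul_nonpos_of_nonneg_of_nonpos ht (sub_neg.2 hba).le⟩

lemma exists_sq_lt_sq_of_pos_of_lt {f : ℝ → ℝ} {x y : ℝ} (hf : ContinuousOn f (uIcc x y))
    (hx : 0 < f x) (hyx : f y < f x) : ∃ c ∈ uIcc x y, f c ^ 2 < f x ^ 2 := by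
  rcases le_or_gt 0 (f y) with hy | hy
  · exact ⟨y, right_mem_uIcc, sq_lt_sq' (by linarith) hyx⟩
  · obtain ⟨c, hc, hc0⟩ := intermediate_value_uIcc hf (mem_uIcc.2 (Or.inr ⟨hy.le, hx.le⟩))
    exact ⟨c, hc, by simpa [hc0] using pow_pos hx 2⟩

lemma isMinOn_sq_iff_of_strictAntiOn {f : ℝ → ℝ} {a b x : ℝ} (hc : ContinuousOn f (Icc a b))
    (hf : StrictAntiOn f (Icc a b)) (hx : x ∈ Icc a b) :
    IsMinOn (fun u => f u ^ 2) (Icc a b) x ↔ (0 < f x → x = b) ∧ (f x < 0 → x = a) := by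
  have ha : a ∈ Icc a b := left_mem_Icc.2 (hx.1.trans hx.2)
  have hb : b ∈ Icc a b := right_mem_Icc.2 (hx.1.trans hx.2)
  rw [isMinOn_iff]
  constructor
  · intro hmin
    refine ⟨fun hpos => ?_, fun hneg => ?_⟩
    · by_contra hxb
      have hsub := uIcc_subset_Icc hx hb
      obtain ⟨c, hcxb, hlt⟩ := exists_sq_lt_sq_of_pos_of_lt (hc.mono hsub) hpos
        (hf hx hb (lt_of_le_of_ne hx.2 hxb))
      exact (hmin c (hsub hcxb)).not_gt hlt
    · by_contra hxa
      have hsub := uIcc_subset_Icc hx ha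
      -- the same argument applied to `-f`, which has the same square
      obtain ⟨c, hcxa, hlt⟩ := exists_sq_lt_sq_of_pos_of_lt (hc.mono hsub).neg (neg_pos.2 hneg)
        (neg_lt_neg (hf ha hx (lt_of_le_of_ne' hx.1 hxa)))
      simp only [Pi.neg_apply, neg_sq] at hlt
      exact (hmin c (hsub hcxa)).not_gt hlt
  · rintro ⟨hpos, hneg⟩ u hu
    rcases lt_trichotomy (f x) 0 with hx0 | hx0 | hx0
    · obtain rfl := hneg hx0
      have hfu : f u ≤ f x := hf.antitoneOn hx hu hu.1
      nlinarith
    · simpa [hx0] using sq_nonneg (f u)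
    · obtain rfl := hpos hx0
      exact pow_le_pow_left₀ hx0.le (hf.antitoneOn hu hx hu.2) 2

lemma Dfun_sub_Dfun (Cf Cb nu lam mu q u w v : ℝ) :
    Dfun Cf Cb nu lam mu q u v - Dfun Cf Cb nu lam mu q w v =
      (Cf + Cb * lam + nu * v) * (w - u) := by
  unfold Dfun
  ring

lemma strictAnti_Dfun {Cf Cb nu lam mu q v : ℝ} (hslope : 0 < Cf + Cb * lam + nu * v) :
    StrictAnti fun u => Dfun Cf Cb nu lam mu q u v := fun u w huw =>
  sub_pos.1 <| (Dfun_sub_Dfun Cf Cb nu lam mu q u w v).symm ▸ mul_pos hslope (sub_pos.2 huw)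

lemma continuous_Dfun (Cf Cb nu lam mu q v : ℝ) :
    Continuous fun u => Dfun Cf Cb nu lam mu q u v := by
  unfold Dfun
  fun_prop

lemma wardrop_iff_isMinOn_sq_Dfun {Cf Cb nu lam mu q xf xb v : ℝ}
    (hslope : 0 < Cf + Cb * lam + nu * v) (hxf : 0 ≤ xf) (hxb : 0 ≤ xb) (hsum : xf + xb = q) :
    (xf * (Cf * xf - (Cb * (lam * xb + mu * v) + nu * xb * v)) ≤ 0 ∧
      xb * ((Cb * (lam * xb + mu * v) + nu * xb * v) - Cf * xf) ≤ 0) ↔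
    IsMinOn (fun u => Dfun Cf Cb nu lam mu q u v ^ 2) (Icc 0 q) xb := by
  subst hsum
  have hD : Dfun Cf Cb nu lam mu (xf + xb) xb v =
      Cf * xf - (Cb * (lam * xb + mu * v) + nu * xb * v) := by
    unfold Dfun
    ring
  rw [mul_sub_nonpos_and_mul_sub_nonpos_iff hxf hxb,
    isMinOn_sq_iff_of_strictAntiOn (continuous_Dfun ..).continuousOn
      ((strictAnti_Dfun hslope).strictAntiOn _) ⟨hxb, le_add_of_nonneg_left hxf⟩,
    hD, sub_pos, sub_neg, right_eq_add]

theorem wardrop_iff_auxiliary_nash_general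
    (C1f C2f Cb nu lam1 lam2 mu1 mu2 q1 q2 : ℝ)
    (hC1f : 0 < C1f) (hC2f : 0 < C2f) (hCb : 0 < Cb) (hnu : 0 < nu)
    (hlam1 : 0 < lam1) (hlam2 : 0 < lam2)
    (x1f x1b x2f x2b : ℝ)
    (hx1f : 0 ≤ x1f) (hx1b : 0 ≤ x1b) (hx2f : 0 ≤ x2f) (hx2b : 0 ≤ x2b)
    (hsum1 : x1f + x1b = q1) (hsum2 : x2f + x2b = q2) :
    (x1f * (C1f * x1f - (Cb * (lam1 * x1b + mu1 * x2b) + nu * x1b * x2b)) ≤ 0 ∧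
     x1b * ((Cb * (lam1 * x1b + mu1 * x2b) + nu * x1b * x2b) - C1f * x1f) ≤ 0 ∧
     x2f * (C2f * x2f - (Cb * (lam2 * x2b + mu2 * x1b) + nu * x2b * x1b)) ≤ 0 ∧
     x2b * ((Cb * (lam2 * x2b + mu2 * x1b) + nu * x2b * x1b) - C2f * x2f) ≤ 0)
    ↔
    ((∀ u ∈ Set.Icc (0 : ℝ) q1,
        (Dfun C1f Cb nu lam1 mu1 q1 x1b x2b) ^ 2 ≤ (Dfun C1f Cb nu lam1 mu1 q1 u x2b) ^ 2) ∧
     (∀ u ∈ Set.Icc (0 : ℝ) q2,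
        (Dfun C2f Cb nu lam2 mu2 q2 x2b x1b) ^ 2 ≤ (Dfun C2f Cb nu lam2 mu2 q2 u x1b) ^ 2)) := by
  have hslope1 : 0 < C1f + Cb * lam1 + nu * x2b := by positivity
  have hslope2 : 0 < C2f + Cb * lam2 + nu * x1b := by positivity
  rw [← and_assoc, wardrop_iff_isMinOn_sq_Dfun hslope1 hx1f hx1b hsum1,
    wardrop_iff_isMinOn_sq_Dfun hslope2 hx2f hx2b hsum2, isMinOn_iff, isMinOn_iff]

/-- A feasible flow vector `(x1f, x1b, x2f, x2b)` is a Wardrop equilibrium of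
the bifurcating-lane diverge model if and only if `(y₁, y₂) := (x1b, x2b)` is a pure Nash
equilibrium of the auxiliary two-player game, i.e. for each `i ≠ j`, `y_i` minimizes
`u ↦ D_i(u, y_j)²` over `[0, q_i]`. -/
theorem wardrop_iff_auxiliary_nash
    (C1f C2f Cb nu lam1 lam2 mu1 mu2 q1 q2 : ℝ)
    (hC1f : 0 < C1f) (hC2f : 0 < C2f) (hCb : 0 < Cb) (hnu : 0 < nu)
    (hlam1 : 0 < lam1) (hlam1' : lam1 ≤ 1) (hlam2 : 0 < lam2) (hlam2' : lam2 ≤ 1)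
    (hmu1 : 0 < mu1) (hmu1' : mu1 ≤ 1) (hmu2 : 0 < mu2) (hmu2' : mu2 ≤ 1)
    (hq1 : 0 ≤ q1) (hq2 : 0 ≤ q2) (hq : q1 + q2 = 1)
    (x1f x1b x2f x2b : ℝ)
    (hx1f : 0 ≤ x1f) (hx1b : 0 ≤ x1b) (hx2f : 0 ≤ x2f) (hx2b : 0 ≤ x2b)
    (hsum1 : x1f + x1b = q1) (hsum2 : x2f + x2b = q2) :
    (x1f * (C1f * x1f - (Cb * (lam1 * x1b + mu1 * x2b) + nu * x1b * x2b)) ≤ 0 ∧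
     x1b * ((Cb * (lam1 * x1b + mu1 * x2b) + nu * x1b * x2b) - C1f * x1f) ≤ 0 ∧
     x2f * (C2f * x2f - (Cb * (lam2 * x2b + mu2 * x1b) + nu * x2b * x1b)) ≤ 0 ∧
     x2b * ((Cb * (lam2 * x2b + mu2 * x1b) + nu * x2b * x1b) - C2f * x2f) ≤ 0)
    ↔
    ((∀ u ∈ Set.Icc (0 : ℝ) q1,
        (Dfun C1f Cb nu lam1 mu1 q1 x1b x2b) ^ 2 ≤ (Dfun C1f Cb nu lam1 mu1 q1 u x2b) ^ 2) ∧
     (∀ u ∈ Set.Icc (0 : ℝ) q2,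
        (Dfun C2f Cb nu lam2 mu2 q2 x2b x1b) ^ 2 ≤ (Dfun C2f Cb nu lam2 mu2 q2 u x1b) ^ 2)) :=
  wardrop_iff_auxiliary_nash_general C1f C2f Cb nu lam1 lam2 mu1 mu2 q1 q2 hC1f hC2f hCb hnu hlam1
    hlam2 x1f x1b x2f x2b hx1f hx1b hx2f hx2b hsum1 hsum2
end

section
/- The auxiliary two-player game of the bifurcating-lane diverge model has at least one pure Nash equilibrium: there exists y = (y_1, y_2) with y_i ∈ [0, q_i] such that for each i ≠ j in {1,2}, y_i minimizes u ↦ D_i(u, y_j)² over u ∈ [0, q_i]. -/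
/-- Best response: clamp the root of `u ↦ D(u,v)` to `0` from below. -/
noncomputable def BR (Cf Cb nu lam mu q v : ℝ) : ℝ :=
  max 0 ((Cf * q - Cb * mu * v) / (Cf + Cb * lam + nu * v))

lemma Dfun_eq (Cf Cb nu lam mu q u v : ℝ) :
    Dfun Cf Cb nu lam mu q u v = (Cf * q - Cb * mu * v) - (Cf + Cb * lam + nu * v) * u := by
  simp [Dfun]; ring

lemma den_pos {Cf Cb nu lam v : ℝ} (hCf : 0 < Cf) (hCb : 0 < Cb) (hnu : 0 < nu)
    (hlam : 0 < lam) (hv : 0 ≤ v) : 0 < Cf + Cb * lam + nu * v := by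
  have := mul_pos hCb hlam
  have := mul_nonneg hnu.le hv
  linarith

lemma BR_mem {Cf Cb nu lam mu q v : ℝ} (hCf : 0 < Cf) (hCb : 0 < Cb) (hnu : 0 < nu)
    (hlam : 0 < lam) (hmu : 0 < mu) (hq : 0 ≤ q) (hv : 0 ≤ v) :
    BR Cf Cb nu lam mu q v ∈ Set.Icc (0 : ℝ) q := by
  have hden := den_pos hCf hCb hnu hlam hv (Cb := Cb)
  constructor
  · exact le_max_left _ _
  · apply max_le hq
    rw [div_le_iff₀ hden]
    have h1 : 0 ≤ Cb * mu * v := by positivity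
    have h2 : 0 ≤ (Cb * lam + nu * v) * q := by positivity
    nlinarith

lemma BR_min {Cf Cb nu lam mu q v : ℝ} (hCf : 0 < Cf) (hCb : 0 < Cb) (hnu : 0 < nu)
    (hlam : 0 < lam) (hmu : 0 < mu) (hq : 0 ≤ q) (hv : 0 ≤ v) :
    ∀ u ∈ Set.Icc (0 : ℝ) q,
      (Dfun Cf Cb nu lam mu q (BR Cf Cb nu lam mu q v) v) ^ 2 ≤
        (Dfun Cf Cb nu lam mu q u v) ^ 2 := by
  intro u hu
  have hden := den_pos hCf hCb hnu hlam hv (Cb := Cb)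
  set N := Cf * q - Cb * mu * v with hN
  set den := Cf + Cb * lam + nu * v with hd
  rcases le_or_gt N 0 with hNle | hNpos
  · have hb : BR Cf Cb nu lam mu q v = 0 := by
      have : N / den ≤ 0 := div_nonpos_of_nonpos_of_nonneg hNle hden.le
      simpa [BR, ← hN, ← hd] using max_eq_left this
    rw [hb, Dfun_eq, Dfun_eq, ← hN, ← hd]
    have hu0 : 0 ≤ u := hu.1
    nlinarith [mul_nonneg hden.le hu0]
  · have hb : BR Cf Cb nu lam mu q v = N / den := by
      have : (0:ℝ) ≤ N / den := le_of_lt (div_pos hNpos hden)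
      simpa [BR, ← hN, ← hd] using max_eq_right this
    rw [hb, Dfun_eq, ← hN, ← hd, mul_div_cancel₀ _ hden.ne']
    simp [sq_nonneg]

lemma BR_contOn {Cf Cb nu lam mu q : ℝ} (hCf : 0 < Cf) (hCb : 0 < Cb) (hnu : 0 < nu)
    (hlam : 0 < lam) :
    ContinuousOn (fun v => BR Cf Cb nu lam mu q v) (Set.Ici (0:ℝ)) := by
  refine ContinuousOn.sup continuousOn_const (ContinuousOn.div (by fun_prop) (by fun_prop) ?_)
  intro v hv
  exact (den_pos hCf hCb hnu hlam hv).ne'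

/-- The auxiliary two-player game of the bifurcating-lane diverge model has
at least one pure Nash equilibrium: there exists `(y₁, y₂)` with `y_i ∈ [0, q_i]` such
that for each `i ≠ j`, `y_i` minimizes `u ↦ D_i(u, y_j)²` over `[0, q_i]`. -/
theorem auxiliary_nash_exists
    (C1f C2f Cb nu lam1 lam2 mu1 mu2 q1 q2 : ℝ)
    (hC1f : 0 < C1f) (hC2f : 0 < C2f) (hCb : 0 < Cb) (hnu : 0 < nu)
    (hlam1 : 0 < lam1) (hlam1' : lam1 ≤ 1) (hlam2 : 0 < lam2) (hlam2' : lam2 ≤ 1)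
    (hmu1 : 0 < mu1) (hmu1' : mu1 ≤ 1) (hmu2 : 0 < mu2) (hmu2' : mu2 ≤ 1)
    (hq1 : 0 ≤ q1) (hq2 : 0 ≤ q2) (hq : q1 + q2 = 1) :
    ∃ y1 y2 : ℝ, y1 ∈ Set.Icc (0 : ℝ) q1 ∧ y2 ∈ Set.Icc (0 : ℝ) q2 ∧
      (∀ u ∈ Set.Icc (0 : ℝ) q1,
        (Dfun C1f Cb nu lam1 mu1 q1 y1 y2) ^ 2 ≤ (Dfun C1f Cb nu lam1 mu1 q1 u y2) ^ 2) ∧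
      (∀ u ∈ Set.Icc (0 : ℝ) q2,
        (Dfun C2f Cb nu lam2 mu2 q2 y2 y1) ^ 2 ≤ (Dfun C2f Cb nu lam2 mu2 q2 u y1) ^ 2) := by
  set B2 : ℝ → ℝ := fun x => BR C2f Cb nu lam2 mu2 q2 x with hB2
  set g : ℝ → ℝ := fun x => BR C1f Cb nu lam1 mu1 q1 (B2 x) with hg
  -- g maps [0,q1] into [0,q1]
  have hgmem : ∀ x ∈ Set.Icc (0:ℝ) q1, g x ∈ Set.Icc (0:ℝ) q1 := by
    intro x hx
    have h2 := BR_mem hC2f hCb hnu hlam2 hmu2 hq2 hx.1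
    exact BR_mem hC1f hCb hnu hlam1 hmu1 hq1 h2.1
  -- continuity of h := g - id on [0,q1]
  have hcont : ContinuousOn (fun x => g x - x) (Set.Icc (0:ℝ) q1) := by
    apply ContinuousOn.sub _ continuousOn_id
    have hc2 : ContinuousOn B2 (Set.Icc (0:ℝ) q1) :=
      (BR_contOn hC2f hCb hnu hlam2).mono (fun x hx => hx.1)
    have hc1 : ContinuousOn (fun v => BR C1f Cb nu lam1 mu1 q1 v) (Set.Ici (0:ℝ)) :=
      BR_contOn hC1f hCb hnu hlam1
    exact hc1.comp hc2 (fun x hx => (BR_mem hC2f hCb hnu hlam2 hmu2 hq2 hx.1).1)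
  have h0 : (0:ℝ) ≤ g 0 - 0 := by
    have := hgmem 0 ⟨le_refl 0, hq1⟩
    linarith [this.1]
  have h1 : g q1 - q1 ≤ 0 := by
    have := hgmem q1 ⟨hq1, le_refl q1⟩
    linarith [this.2]
  have hiv : (0:ℝ) ∈ Set.Icc (g q1 - q1) (g 0 - 0) := ⟨h1, h0⟩
  have := intermediate_value_Icc' hq1 hcont hiv
  obtain ⟨x, hxmem, hx⟩ := this
  have hgx : g x = x := by linarith [sub_eq_zero.mp hx]
  refine ⟨x, B2 x, ?_, ?_, ?_, ?_⟩
  · exact hxmem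
  · exact BR_mem hC2f hCb hnu hlam2 hmu2 hq2 hxmem.1
  · have hv2 : 0 ≤ B2 x := (BR_mem hC2f hCb hnu hlam2 hmu2 hq2 hxmem.1).1
    have h := BR_min hC1f hCb hnu hlam1 hmu1 hq1 hv2
    rw [show BR C1f Cb nu lam1 mu1 q1 (B2 x) = x from hgx] at h
    exact h
  · exact BR_min hC2f hCb hnu hlam2 hmu2 hq2 hxmem.1
end

section
/- If (λ_i − μ_i)·C^b ≥ ν − C_i^f holds for both i = 1 and i = 2, then the auxiliary two-player game of the bifurcating-lane diverge model has at most one pure Nash equilibrium: if y = (y_1, y_2) and y' = (y'_1, y'_2), with y_i, y'_i ∈ [0, q_i], are both pure Nash equilibria, then y = y'. -/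
/-- If `y < q` is a best response, then `D(y,v) ≤ 0`. -/
lemma Dfun_sign_nonpos (Cf Cb nu lam mu q y v : ℝ)
    (hCf : 0 < Cf) (hCb : 0 < Cb) (hnu : 0 < nu) (hlam : 0 < lam)
    (hv : 0 ≤ v) (hy : y ∈ Set.Icc (0 : ℝ) q) (hyq : y < q)
    (hnash : ∀ u ∈ Set.Icc (0 : ℝ) q,
      (Dfun Cf Cb nu lam mu q y v) ^ 2 ≤ (Dfun Cf Cb nu lam mu q u v) ^ 2) :
    Dfun Cf Cb nu lam mu q y v ≤ 0 := by
  by_contra h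
  push_neg at h
  set D := Dfun Cf Cb nu lam mu q y v with hD
  set k := Cf + Cb * lam + nu * v with hk
  have hkpos : 0 < k := by
    have : 0 ≤ nu * v := mul_nonneg hnu.le hv
    have : 0 < Cb * lam := mul_pos hCb hlam
    simp only [hk]; linarith
  set u := min q (y + D / k) with hu
  have hDk : 0 < D / k := div_pos h hkpos
  have hyu : y < u := lt_min hyq (by linarith)
  have huq : u ≤ q := min_le_left _ _
  have hu0 : 0 ≤ u := le_trans hy.1 hyu.le
  have huy : u ≤ y + D / k := min_le_right _ _
  have hval : Dfun Cf Cb nu lam mu q u v = D - k * (u - y) := by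
    simp only [hD, hk, Dfun]; ring
  have h1 : 0 ≤ Dfun Cf Cb nu lam mu q u v := by
    rw [hval]
    have : k * (u - y) ≤ k * (D / k) := by
      apply mul_le_mul_of_nonneg_left (by linarith) hkpos.le
    rw [mul_div_cancel₀ _ hkpos.ne'] at this
    linarith
  have h2 : Dfun Cf Cb nu lam mu q u v < D := by
    rw [hval]
    have : 0 < k * (u - y) := mul_pos hkpos (by linarith)
    linarith
  have := hnash u ⟨hu0, huq⟩
  nlinarith [this, h1, h2]

/-- If `y > 0` is a best response, then `D(y,v) ≥ 0`. -/
lemma Dfun_sign_nonneg (Cf Cb nu lam mu q y v : ℝ)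
    (hCf : 0 < Cf) (hCb : 0 < Cb) (hnu : 0 < nu) (hlam : 0 < lam)
    (hv : 0 ≤ v) (hy : y ∈ Set.Icc (0 : ℝ) q) (hy0 : 0 < y)
    (hnash : ∀ u ∈ Set.Icc (0 : ℝ) q,
      (Dfun Cf Cb nu lam mu q y v) ^ 2 ≤ (Dfun Cf Cb nu lam mu q u v) ^ 2) :
    0 ≤ Dfun Cf Cb nu lam mu q y v := by
  by_contra h
  push_neg at h
  set D := Dfun Cf Cb nu lam mu q y v with hD
  set k := Cf + Cb * lam + nu * v with hk
  have hkpos : 0 < k := by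
    have : 0 ≤ nu * v := mul_nonneg hnu.le hv
    have : 0 < Cb * lam := mul_pos hCb hlam
    simp only [hk]; linarith
  set u := max 0 (y + D / k) with hu
  have hDk : D / k < 0 := div_neg_of_neg_of_pos h hkpos
  have hyu : u < y := max_lt hy0 (by linarith)
  have hu0 : 0 ≤ u := le_max_left _ _
  have huq : u ≤ q := le_trans hyu.le hy.2
  have huy : y + D / k ≤ u := le_max_right _ _
  have hval : Dfun Cf Cb nu lam mu q u v = D + k * (y - u) := by
    simp only [hD, hk, Dfun]; ring
  have h1 : Dfun Cf Cb nu lam mu q u v ≤ 0 := by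
    rw [hval]
    have : k * (y - u) ≤ k * (-(D / k)) := by
      apply mul_le_mul_of_nonneg_left (by linarith) hkpos.le
    rw [mul_neg, mul_div_cancel₀ _ hkpos.ne'] at this
    linarith
  have h2 : D < Dfun Cf Cb nu lam mu q u v := by
    rw [hval]
    have : 0 < k * (y - u) := mul_pos hkpos (by linarith)
    linarith
  have := hnash u ⟨hu0, huq⟩
  nlinarith [this, h1, h2]

/-- Crossing is impossible: `y1 < y1'` leads to a contradiction. -/
lemma no_cross
    (C1f C2f Cb nu lam1 lam2 mu1 mu2 q1 q2 : ℝ)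
    (hC1f : 0 < C1f) (hC2f : 0 < C2f) (hCb : 0 < Cb) (hnu : 0 < nu)
    (hlam1 : 0 < lam1) (hlam2 : 0 < lam2)
    (hmu1 : 0 < mu1) (hmu2 : 0 < mu2)
    (hq1 : 0 ≤ q1) (hq2 : 0 ≤ q2) (hq : q1 + q2 = 1)
    (hcond1 : (lam1 - mu1) * Cb ≥ nu - C1f) (hcond2 : (lam2 - mu2) * Cb ≥ nu - C2f)
    (y1 y2 y1' y2' : ℝ)
    (hy1 : y1 ∈ Set.Icc (0 : ℝ) q1) (hy2 : y2 ∈ Set.Icc (0 : ℝ) q2)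
    (hy1' : y1' ∈ Set.Icc (0 : ℝ) q1) (hy2' : y2' ∈ Set.Icc (0 : ℝ) q2)
    (hnash1 : ∀ u ∈ Set.Icc (0 : ℝ) q1,
      (Dfun C1f Cb nu lam1 mu1 q1 y1 y2) ^ 2 ≤ (Dfun C1f Cb nu lam1 mu1 q1 u y2) ^ 2)
    (hnash2 : ∀ u ∈ Set.Icc (0 : ℝ) q2,
      (Dfun C2f Cb nu lam2 mu2 q2 y2 y1) ^ 2 ≤ (Dfun C2f Cb nu lam2 mu2 q2 u y1) ^ 2)
    (hnash1' : ∀ u ∈ Set.Icc (0 : ℝ) q1,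
      (Dfun C1f Cb nu lam1 mu1 q1 y1' y2') ^ 2 ≤ (Dfun C1f Cb nu lam1 mu1 q1 u y2') ^ 2)
    (hnash2' : ∀ u ∈ Set.Icc (0 : ℝ) q2,
      (Dfun C2f Cb nu lam2 mu2 q2 y2' y1') ^ 2 ≤ (Dfun C2f Cb nu lam2 mu2 q2 u y1') ^ 2)
    (hlt : y1 < y1') : False := by
  have hy1q : y1 < q1 := lt_of_lt_of_le hlt hy1'.2
  have hy1'0 : 0 < y1' := lt_of_le_of_lt hy1.1 hlt
  -- player 1 sign facts
  have hB : Dfun C1f Cb nu lam1 mu1 q1 y1 y2 ≤ 0 :=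
    Dfun_sign_nonpos C1f Cb nu lam1 mu1 q1 y1 y2 hC1f hCb hnu hlam1 hy2.1 hy1 hy1q hnash1
  have hA : 0 ≤ Dfun C1f Cb nu lam1 mu1 q1 y1' y2' :=
    Dfun_sign_nonneg C1f Cb nu lam1 mu1 q1 y1' y2' hC1f hCb hnu hlam1 hy2'.1 hy1' hy1'0 hnash1'
  -- inequality I1
  have I1 : (C1f + Cb * lam1 + nu * y2') * (y1' - y1) ≤ (Cb * mu1 + nu * y1) * (y2 - y2') := by
    simp only [Dfun] at hA hB
    nlinarith [hA, hB]
  have hm1 : 0 < Cb * mu1 + nu * y1 := by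
    have := mul_pos hCb hmu1
    have := mul_nonneg hnu.le hy1.1
    linarith
  have hP1 : Cb * mu1 + nu * y1 < C1f + Cb * lam1 + nu * y2' := by
    have h1 : 0 < nu * (1 + y2' - y1) := mul_pos hnu (by linarith [hy2'.1])
    nlinarith [hcond1, h1]
  have ha : 0 < y1' - y1 := by linarith
  -- c := y2 - y2' > 0
  have hcpos : 0 < y2 - y2' := by
    have h1 : 0 < (C1f + Cb * lam1 + nu * y2') * (y1' - y1) :=
      mul_pos (by linarith) ha
    by_contra hc
    push_neg at hc
    have : (Cb * mu1 + nu * y1) * (y2 - y2') ≤ 0 :=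
      mul_nonpos_of_nonneg_of_nonpos hm1.le (by linarith)
    linarith
  have hy2'q : y2' < q2 := lt_of_lt_of_le (by linarith) hy2.2
  have hy20 : 0 < y2 := lt_of_le_of_lt hy2'.1 (by linarith)
  -- player 2 sign facts
  have hB' : Dfun C2f Cb nu lam2 mu2 q2 y2' y1' ≤ 0 :=
    Dfun_sign_nonpos C2f Cb nu lam2 mu2 q2 y2' y1' hC2f hCb hnu hlam2 hy1'.1 hy2' hy2'q hnash2'
  have hA' : 0 ≤ Dfun C2f Cb nu lam2 mu2 q2 y2 y1 :=
    Dfun_sign_nonneg C2f Cb nu lam2 mu2 q2 y2 y1 hC2f hCb hnu hlam2 hy1.1 hy2 hy20 hnash2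
  have I2 : (C2f + Cb * lam2 + nu * y1) * (y2 - y2') ≤ (Cb * mu2 + nu * y2') * (y1' - y1) := by
    simp only [Dfun] at hA' hB'
    nlinarith [hA', hB']
  have hm2 : 0 < Cb * mu2 + nu * y2' := by
    have := mul_pos hCb hmu2
    have := mul_nonneg hnu.le hy2'.1
    linarith
  have hP2 : Cb * mu2 + nu * y2' < C2f + Cb * lam2 + nu * y1 := by
    have h1 : 0 < nu * (1 + y1 - y2') := mul_pos hnu (by linarith [hy1.1])
    nlinarith [hcond2, h1]
  -- from I1 : c > a, from I2 : a > c, contradiction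
  have hca : y1' - y1 < y2 - y2' := by
    have h1 : (Cb * mu1 + nu * y1) * (y1' - y1) < (C1f + Cb * lam1 + nu * y2') * (y1' - y1) :=
      mul_lt_mul_of_pos_right hP1 ha
    have h2 : (Cb * mu1 + nu * y1) * (y1' - y1) < (Cb * mu1 + nu * y1) * (y2 - y2') := by
      linarith
    exact lt_of_mul_lt_mul_left h2 hm1.le
  have hac : y2 - y2' < y1' - y1 := by
    have h1 : (Cb * mu2 + nu * y2') * (y2 - y2') < (C2f + Cb * lam2 + nu * y1) * (y2 - y2') :=
      mul_lt_mul_of_pos_right hP2 hcpos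
    have h2 : (Cb * mu2 + nu * y2') * (y2 - y2') < (Cb * mu2 + nu * y2') * (y1' - y1) := by
      linarith
    exact lt_of_mul_lt_mul_left h2 hm2.le
  linarith

/-- First coordinates of any two equilibria agree. -/
lemma aux_first
    (C1f C2f Cb nu lam1 lam2 mu1 mu2 q1 q2 : ℝ)
    (hC1f : 0 < C1f) (hC2f : 0 < C2f) (hCb : 0 < Cb) (hnu : 0 < nu)
    (hlam1 : 0 < lam1) (hlam2 : 0 < lam2)
    (hmu1 : 0 < mu1) (hmu2 : 0 < mu2)
    (hq1 : 0 ≤ q1) (hq2 : 0 ≤ q2) (hq : q1 + q2 = 1)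
    (hcond1 : (lam1 - mu1) * Cb ≥ nu - C1f) (hcond2 : (lam2 - mu2) * Cb ≥ nu - C2f)
    (y1 y2 y1' y2' : ℝ)
    (hy1 : y1 ∈ Set.Icc (0 : ℝ) q1) (hy2 : y2 ∈ Set.Icc (0 : ℝ) q2)
    (hy1' : y1' ∈ Set.Icc (0 : ℝ) q1) (hy2' : y2' ∈ Set.Icc (0 : ℝ) q2)
    (hnash1 : ∀ u ∈ Set.Icc (0 : ℝ) q1,
      (Dfun C1f Cb nu lam1 mu1 q1 y1 y2) ^ 2 ≤ (Dfun C1f Cb nu lam1 mu1 q1 u y2) ^ 2)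
    (hnash2 : ∀ u ∈ Set.Icc (0 : ℝ) q2,
      (Dfun C2f Cb nu lam2 mu2 q2 y2 y1) ^ 2 ≤ (Dfun C2f Cb nu lam2 mu2 q2 u y1) ^ 2)
    (hnash1' : ∀ u ∈ Set.Icc (0 : ℝ) q1,
      (Dfun C1f Cb nu lam1 mu1 q1 y1' y2') ^ 2 ≤ (Dfun C1f Cb nu lam1 mu1 q1 u y2') ^ 2)
    (hnash2' : ∀ u ∈ Set.Icc (0 : ℝ) q2,
      (Dfun C2f Cb nu lam2 mu2 q2 y2' y1') ^ 2 ≤ (Dfun C2f Cb nu lam2 mu2 q2 u y1') ^ 2) :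
    y1 = y1' := by
  rcases lt_trichotomy y1 y1' with h | h | h
  · exact absurd h (fun h => no_cross C1f C2f Cb nu lam1 lam2 mu1 mu2 q1 q2 hC1f hC2f hCb hnu
      hlam1 hlam2 hmu1 hmu2 hq1 hq2 hq hcond1 hcond2 y1 y2 y1' y2'
      hy1 hy2 hy1' hy2' hnash1 hnash2 hnash1' hnash2' h)
  · exact h
  · exact absurd h (fun h => no_cross C1f C2f Cb nu lam1 lam2 mu1 mu2 q1 q2 hC1f hC2f hCb hnu
      hlam1 hlam2 hmu1 hmu2 hq1 hq2 hq hcond1 hcond2 y1' y2' y1 y2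
      hy1' hy2' hy1 hy2 hnash1' hnash2' hnash1 hnash2 h)

/-- If `(λ_i − μ_i)·C^b ≥ ν − C_i^f` for both `i = 1, 2`, then the auxiliary
two-player game has at most one pure Nash equilibrium. -/
theorem auxiliary_nash_unique
    (C1f C2f Cb nu lam1 lam2 mu1 mu2 q1 q2 : ℝ)
    (hC1f : 0 < C1f) (hC2f : 0 < C2f) (hCb : 0 < Cb) (hnu : 0 < nu)
    (hlam1 : 0 < lam1) (hlam1' : lam1 ≤ 1) (hlam2 : 0 < lam2) (hlam2' : lam2 ≤ 1)
    (hmu1 : 0 < mu1) (hmu1' : mu1 ≤ 1) (hmu2 : 0 < mu2) (hmu2' : mu2 ≤ 1)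
    (hq1 : 0 ≤ q1) (hq2 : 0 ≤ q2) (hq : q1 + q2 = 1)
    (hcond1 : (lam1 - mu1) * Cb ≥ nu - C1f) (hcond2 : (lam2 - mu2) * Cb ≥ nu - C2f)
    (y1 y2 y1' y2' : ℝ)
    (hy1 : y1 ∈ Set.Icc (0 : ℝ) q1) (hy2 : y2 ∈ Set.Icc (0 : ℝ) q2)
    (hy1' : y1' ∈ Set.Icc (0 : ℝ) q1) (hy2' : y2' ∈ Set.Icc (0 : ℝ) q2)
    (hnash1 : ∀ u ∈ Set.Icc (0 : ℝ) q1,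
      (Dfun C1f Cb nu lam1 mu1 q1 y1 y2) ^ 2 ≤ (Dfun C1f Cb nu lam1 mu1 q1 u y2) ^ 2)
    (hnash2 : ∀ u ∈ Set.Icc (0 : ℝ) q2,
      (Dfun C2f Cb nu lam2 mu2 q2 y2 y1) ^ 2 ≤ (Dfun C2f Cb nu lam2 mu2 q2 u y1) ^ 2)
    (hnash1' : ∀ u ∈ Set.Icc (0 : ℝ) q1,
      (Dfun C1f Cb nu lam1 mu1 q1 y1' y2') ^ 2 ≤ (Dfun C1f Cb nu lam1 mu1 q1 u y2') ^ 2)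
    (hnash2' : ∀ u ∈ Set.Icc (0 : ℝ) q2,
      (Dfun C2f Cb nu lam2 mu2 q2 y2' y1') ^ 2 ≤ (Dfun C2f Cb nu lam2 mu2 q2 u y1') ^ 2) :
    y1 = y1' ∧ y2 = y2' := by
  constructor
  · exact aux_first C1f C2f Cb nu lam1 lam2 mu1 mu2 q1 q2 hC1f hC2f hCb hnu
      hlam1 hlam2 hmu1 hmu2 hq1 hq2 hq hcond1 hcond2 y1 y2 y1' y2'
      hy1 hy2 hy1' hy2' hnash1 hnash2 hnash1' hnash2'
  · exact aux_first C2f C1f Cb nu lam2 lam1 mu2 mu1 q2 q1 hC2f hC1f hCb hnu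
      hlam2 hlam1 hmu2 hmu1 hq2 hq1 (by linarith) hcond2 hcond1 y2 y1 y2' y1'
      hy2 hy1 hy2' hy1' hnash2 hnash1 hnash2' hnash1'
end

section
/- If (λ_i − μ_i)·C^b ≥ ν − C_i^f holds for both i = 1 and i = 2, then the Wardrop equilibrium of the bifurcating-lane diverge model is unique: if x and x' are both feasible flow vectors satisfying the Wardrop equilibrium conditions, then x = x'. -/
/-- Variational inequality from complementarity. -/
lemma vi_ineq (G a a' q : ℝ) (haq : a ≤ q) (ha' : 0 ≤ a') (ha'q : a' ≤ q)
    (h1 : a * G ≤ 0) (h2 : 0 ≤ (q - a) * G) : 0 ≤ G * (a' - a) := by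
  rcases le_or_gt 0 G with hG | hG
  · rcases eq_or_lt_of_le hG with hG0 | hGpos
    · nlinarith
    · have ha0 : a ≤ 0 := by nlinarith
      nlinarith
  · have haeq : a = q := by nlinarith
    subst haeq
    nlinarith

set_option maxHeartbeats 1600000 in
lemma key_pos (P1 P2 M1 M2 nu q1 q2 a b a' b' : ℝ)
    (hnu : 0 < nu) (hM1 : 0 < M1) (hM2 : 0 < M2)
    (hP1 : M1 + nu ≤ P1) (hP2 : M2 + nu ≤ P2)
    (ha : 0 ≤ a) (haq : a ≤ q1) (ha' : 0 ≤ a') (ha'q : a' ≤ q1)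
    (hb : 0 ≤ b) (hbq : b ≤ q2) (hb' : 0 ≤ b') (hb'q : b' ≤ q2)
    (hq : q1 + q2 = 1)
    (h1 : (P1*(a-a') + M1*(b-b') + nu*(a*b - a'*b')) * (a - a') ≤ 0)
    (h2 : (P2*(b-b') + M2*(a-a') + nu*(a*b - a'*b')) * (b - b') ≤ 0)
    (hda : a' < a) : False := by
  have hu : 0 < a - a' := by linarith
  have hq2' : 0 ≤ q2 := le_trans hb hbq
  have hq1pos : 0 < q1 := lt_of_lt_of_le (lt_of_le_of_lt ha' hda) haq
  have ha1 : a ≤ 1 := by linarith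
  have hF1 : P1*(a-a') + M1*(b-b') + nu*(a*b - a'*b') ≤ 0 := by
    have := le_of_mul_le_mul_right (by linarith : (P1*(a-a') + M1*(b-b') + nu*(a*b - a'*b')) * (a-a') ≤ 0 * (a-a')) hu
    linarith
  have hdb : b < b' := by
    by_contra hc
    push_neg at hc
    nlinarith [mul_pos (lt_of_lt_of_le (by linarith : (0:ℝ) < M1 + nu) hP1) hu,
      mul_nonneg hM1.le (by linarith : (0:ℝ) ≤ b - b'),
      mul_nonneg (mul_nonneg hnu.le ha) (by linarith : (0:ℝ) ≤ b - b'),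
      mul_nonneg (mul_nonneg hnu.le hb') hu.le]
  have hv : 0 < b' - b := by linarith
  have hF2 : 0 ≤ P2*(b-b') + M2*(a-a') + nu*(a*b - a'*b') := by
    have := le_of_mul_le_mul_right (by nlinarith [h2] : 0 * (b'-b) ≤ (P2*(b-b') + M2*(a-a') + nu*(a*b - a'*b')) * (b'-b)) hv
    linarith
  have I1 : (P1 + nu*b') * (a - a') ≤ (M1 + nu*a) * (b' - b) := by linarith [hF1, sq_nonneg 0]
  have I2 : (P2 + nu*a') * (b' - b) ≤ (M2 + nu*b) * (a - a') := by linarith [hF2]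
  have hC0 : 0 < M1 + nu*a := by nlinarith [mul_nonneg hnu.le ha]
  have hD0 : 0 < M2 + nu*b := by nlinarith [mul_nonneg hnu.le hb]
  have hA : M1 + nu*a < P1 + nu*b' := by
    nlinarith [mul_pos hnu (lt_of_le_of_lt hb hdb), mul_nonneg hnu.le (by linarith : (0:ℝ) ≤ 1 - a)]
  have hB : M2 + nu*b < P2 + nu*a' := by
    nlinarith [mul_nonneg hnu.le ha', mul_pos hnu (by linarith : (0:ℝ) < 1 - b)]
  have h3 : ((P1 + nu*b') * (a - a')) * ((P2 + nu*a') * (b' - b)) ≤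
      ((M1 + nu*a) * (b' - b)) * ((M2 + nu*b) * (a - a')) := by
    apply mul_le_mul I1 I2 (mul_nonneg (by linarith) hv.le)
      (mul_nonneg (by positivity) hv.le)
  have huv : 0 < (a - a') * (b' - b) := mul_pos hu hv
  have hAB : (P1 + nu*b') * (P2 + nu*a') ≤ (M1 + nu*a) * (M2 + nu*b) := by
    nlinarith [h3, huv]
  nlinarith [hAB, mul_pos hC0 hD0, mul_lt_mul_of_pos_right hA (by linarith : (0:ℝ) < P2 + nu*a'),
    mul_lt_mul_of_pos_left hB hC0]

lemma key_eq (P1 P2 M1 M2 nu q1 q2 a b a' b' : ℝ)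
    (hnu : 0 < nu) (hM1 : 0 < M1) (hM2 : 0 < M2)
    (hP1 : M1 + nu ≤ P1) (hP2 : M2 + nu ≤ P2)
    (ha : 0 ≤ a) (haq : a ≤ q1) (ha' : 0 ≤ a') (ha'q : a' ≤ q1)
    (hb : 0 ≤ b) (hbq : b ≤ q2) (hb' : 0 ≤ b') (hb'q : b' ≤ q2)
    (hq : q1 + q2 = 1)
    (h1 : (P1*(a-a') + M1*(b-b') + nu*(a*b - a'*b')) * (a - a') ≤ 0)
    (h2 : (P2*(b-b') + M2*(a-a') + nu*(a*b - a'*b')) * (b - b') ≤ 0) :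
    a = a' ∧ b = b' := by
  constructor
  · by_contra h
    rcases lt_or_gt_of_ne h with hlt | hgt
    · exact key_pos P1 P2 M1 M2 nu q1 q2 a' b' a b hnu hM1 hM2 hP1 hP2 ha' ha'q ha haq
        hb' hb'q hb hbq hq (by linarith [h1]) (by linarith [h2]) hlt
    · exact key_pos P1 P2 M1 M2 nu q1 q2 a b a' b' hnu hM1 hM2 hP1 hP2 ha haq ha' ha'q
        hb hbq hb' hb'q hq h1 h2 hgt
  · by_contra h
    rcases lt_or_gt_of_ne h with hlt | hgt
    · exact key_pos P2 P1 M2 M1 nu q2 q1 b' a' b a hnu hM2 hM1 hP2 hP1 hb' hb'q hb hbq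
        ha' ha'q ha haq (by linarith) (by linarith [h2]) (by linarith [h1]) hlt
    · exact key_pos P2 P1 M2 M1 nu q2 q1 b a b' a' hnu hM2 hM1 hP2 hP1 hb hbq hb' hb'q
        ha haq ha' ha'q (by linarith) (by linarith [h2]) (by linarith [h1]) hgt


set_option maxHeartbeats 1600000 in
/-- If `(λ_i − μ_i)·C^b ≥ ν − C_i^f` for both `i = 1, 2`, then the Wardrop
equilibrium of the bifurcating-lane diverge model is unique: any two feasible flow
vectors satisfying the Wardrop equilibrium conditions coincide. -/
theorem wardrop_unique
    (C1f C2f Cb nu lam1 lam2 mu1 mu2 q1 q2 : ℝ)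
    (hC1f : 0 < C1f) (hC2f : 0 < C2f) (hCb : 0 < Cb) (hnu : 0 < nu)
    (hlam1 : 0 < lam1) (hlam1' : lam1 ≤ 1) (hlam2 : 0 < lam2) (hlam2' : lam2 ≤ 1)
    (hmu1 : 0 < mu1) (hmu1' : mu1 ≤ 1) (hmu2 : 0 < mu2) (hmu2' : mu2 ≤ 1)
    (hq1 : 0 ≤ q1) (hq2 : 0 ≤ q2) (hq : q1 + q2 = 1)
    (hcond1 : (lam1 - mu1) * Cb ≥ nu - C1f) (hcond2 : (lam2 - mu2) * Cb ≥ nu - C2f)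
    (x1f x1b x2f x2b x1f' x1b' x2f' x2b' : ℝ)
    (hx1f : 0 ≤ x1f) (hx1b : 0 ≤ x1b) (hx2f : 0 ≤ x2f) (hx2b : 0 ≤ x2b)
    (hsum1 : x1f + x1b = q1) (hsum2 : x2f + x2b = q2)
    (hx1f' : 0 ≤ x1f') (hx1b' : 0 ≤ x1b') (hx2f' : 0 ≤ x2f') (hx2b' : 0 ≤ x2b')
    (hsum1' : x1f' + x1b' = q1) (hsum2' : x2f' + x2b' = q2)
    (heq1 : x1f * (C1f * x1f - (Cb * (lam1 * x1b + mu1 * x2b) + nu * x1b * x2b)) ≤ 0)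
    (heq2 : x1b * ((Cb * (lam1 * x1b + mu1 * x2b) + nu * x1b * x2b) - C1f * x1f) ≤ 0)
    (heq3 : x2f * (C2f * x2f - (Cb * (lam2 * x2b + mu2 * x1b) + nu * x2b * x1b)) ≤ 0)
    (heq4 : x2b * ((Cb * (lam2 * x2b + mu2 * x1b) + nu * x2b * x1b) - C2f * x2f) ≤ 0)
    (heq1' : x1f' * (C1f * x1f' - (Cb * (lam1 * x1b' + mu1 * x2b') + nu * x1b' * x2b')) ≤ 0)
    (heq2' : x1b' * ((Cb * (lam1 * x1b' + mu1 * x2b') + nu * x1b' * x2b') - C1f * x1f') ≤ 0)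
    (heq3' : x2f' * (C2f * x2f' - (Cb * (lam2 * x2b' + mu2 * x1b') + nu * x2b' * x1b')) ≤ 0)
    (heq4' : x2b' * ((Cb * (lam2 * x2b' + mu2 * x1b') + nu * x2b' * x1b') - C2f * x2f') ≤ 0) :
    x1f = x1f' ∧ x1b = x1b' ∧ x2f = x2f' ∧ x2b = x2b' := by
  have e1 : x1f = q1 - x1b := by linarith
  have e2 : x2f = q2 - x2b := by linarith
  have e1' : x1f' = q1 - x1b' := by linarith
  have e2' : x2f' = q2 - x2b' := by linarith
  subst e1; subst e2; subst e1'; subst e2'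
  have hb1 : x1b ≤ q1 := by linarith
  have hb1' : x1b' ≤ q1 := by linarith
  have hb2 : x2b ≤ q2 := by linarith
  have hb2' : x2b' ≤ q2 := by linarith
  have v1 : 0 ≤ ((Cb * (lam1 * x1b + mu1 * x2b) + nu * x1b * x2b) - C1f * (q1 - x1b))
      * (x1b' - x1b) :=
    vi_ineq _ x1b x1b' q1 hb1 hx1b' hb1' heq2 (by linarith [heq1])
  have v1' : 0 ≤ ((Cb * (lam1 * x1b' + mu1 * x2b') + nu * x1b' * x2b') - C1f * (q1 - x1b'))
      * (x1b - x1b') :=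
    vi_ineq _ x1b' x1b q1 hb1' hx1b hb1 heq2' (by linarith [heq1'])
  have v2 : 0 ≤ ((Cb * (lam2 * x2b + mu2 * x1b) + nu * x2b * x1b) - C2f * (q2 - x2b))
      * (x2b' - x2b) :=
    vi_ineq _ x2b x2b' q2 hb2 hx2b' hb2' heq4 (by linarith [heq3])
  have v2' : 0 ≤ ((Cb * (lam2 * x2b' + mu2 * x1b') + nu * x2b' * x1b') - C2f * (q2 - x2b'))
      * (x2b - x2b') :=
    vi_ineq _ x2b' x2b q2 hb2' hx2b hb2 heq4' (by linarith [heq3'])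
  have h1 : ((Cb*lam1 + C1f)*(x1b - x1b') + (Cb*mu1)*(x2b - x2b')
      + nu*(x1b*x2b - x1b'*x2b')) * (x1b - x1b') ≤ 0 := by linarith [v1, v1']
  have h2 : ((Cb*lam2 + C2f)*(x2b - x2b') + (Cb*mu2)*(x1b - x1b')
      + nu*(x1b*x2b - x1b'*x2b')) * (x2b - x2b') ≤ 0 := by linarith [v2, v2']
  have hP1 : Cb*mu1 + nu ≤ Cb*lam1 + C1f := by linarith [hcond1]
  have hP2 : Cb*mu2 + nu ≤ Cb*lam2 + C2f := by linarith [hcond2]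
  obtain ⟨hab, hbb⟩ := key_eq (Cb*lam1 + C1f) (Cb*lam2 + C2f) (Cb*mu1) (Cb*mu2) nu q1 q2
    x1b x2b x1b' x2b' hnu (mul_pos hCb hmu1) (mul_pos hCb hmu2) hP1 hP2
    hx1b hb1 hx1b' hb1' hx2b hb2 hx2b' hb2' hq h1 h2
  exact ⟨by rw [hab], hab, by rw [hbb], hbb⟩
end

section
/- For each i ∈ {1,2}, the root of the cost-difference equation is nonincreasing in the other flow: if 0 ≤ v₁ ≤ v₂, u₁, u₂ ∈ [0, q_i], D_i(u₁, v₁) = 0, and D_i(u₂, v₂) = 0, then u₂ ≤ u₁. -/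
lemma aux_root (Cf Cb nu lam mu q : ℝ)
    (hCf : 0 < Cf) (hCb : 0 < Cb) (hnu : 0 < nu) (hlam : 0 < lam) (hmu : 0 < mu)
    (v1 v2 : ℝ) (hv1 : 0 ≤ v1) (hv : v1 ≤ v2)
    (u1 : ℝ) (hu1 : u1 ∈ Set.Icc (0:ℝ) q) (u2 : ℝ) (hu2 : u2 ∈ Set.Icc (0:ℝ) q)
    (h1 : Dfun Cf Cb nu lam mu q u1 v1 = 0) (h2 : Dfun Cf Cb nu lam mu q u2 v2 = 0) :
    u2 ≤ u1 := by
  simp only [Dfun] at h1 h2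
  obtain ⟨hu10, -⟩ := hu1
  obtain ⟨hu20, -⟩ := hu2
  nlinarith [mul_nonneg (mul_nonneg hnu.le hu20) (sub_nonneg.2 hv),
    mul_nonneg hCb.le (mul_nonneg hmu.le (sub_nonneg.2 hv)),
    mul_pos hCb hlam, mul_nonneg hnu.le hv1]

/-- For each `i ∈ {1,2}`, the root of `D_i(·, v) = 0` in `[0, q_i]` is
nonincreasing in the other flow `v`. -/
theorem root_nonincreasing
    (C1f C2f Cb nu lam1 lam2 mu1 mu2 q1 q2 : ℝ)
    (hC1f : 0 < C1f) (hC2f : 0 < C2f) (hCb : 0 < Cb) (hnu : 0 < nu)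
    (hlam1 : 0 < lam1) (hlam1' : lam1 ≤ 1) (hlam2 : 0 < lam2) (hlam2' : lam2 ≤ 1)
    (hmu1 : 0 < mu1) (hmu1' : mu1 ≤ 1) (hmu2 : 0 < mu2) (hmu2' : mu2 ≤ 1)
    (hq1 : 0 ≤ q1) (hq2 : 0 ≤ q2) (hq : q1 + q2 = 1) :
    (∀ v1 v2 : ℝ, 0 ≤ v1 → v1 ≤ v2 →
      ∀ u1 ∈ Set.Icc (0 : ℝ) q1, ∀ u2 ∈ Set.Icc (0 : ℝ) q1,
        Dfun C1f Cb nu lam1 mu1 q1 u1 v1 = 0 → Dfun C1f Cb nu lam1 mu1 q1 u2 v2 = 0 →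
          u2 ≤ u1) ∧
    (∀ v1 v2 : ℝ, 0 ≤ v1 → v1 ≤ v2 →
      ∀ u1 ∈ Set.Icc (0 : ℝ) q2, ∀ u2 ∈ Set.Icc (0 : ℝ) q2,
        Dfun C2f Cb nu lam2 mu2 q2 u1 v1 = 0 → Dfun C2f Cb nu lam2 mu2 q2 u2 v2 = 0 →
          u2 ≤ u1) := by
  constructor
  · exact fun v1 v2 hv1 hv u1 hu1 u2 hu2 h1 h2 =>
      aux_root C1f Cb nu lam1 mu1 q1 hC1f hCb hnu hlam1 hmu1 v1 v2 hv1 hv u1 hu1 u2 hu2 h1 h2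
  · exact fun v1 v2 hv1 hv u1 hu1 u2 hu2 h1 h2 =>
      aux_root C2f Cb nu lam2 mu2 q2 hC2f hCb hnu hlam2 hmu2 v1 v2 hv1 hv u1 hu1 u2 hu2 h1 h2
end

section
/- For each i ∈ {1,2}, if (λ_i − μ_i)·C^b ≥ ν − C_i^f, then the root of the cost-difference equation is 1-Lipschitz in the other flow: if v₁, v₂ ∈ [0, 1], u₁, u₂ ∈ [0, q_i], D_i(u₁, v₁) = 0, and D_i(u₂, v₂) = 0, then |u₁ − u₂| ≤ |v₁ − v₂|. -/
lemma root_one_lipschitz_aux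
    (Cf Cb nu lam mu q : ℝ)
    (hCf : 0 < Cf) (hCb : 0 < Cb) (hnu : 0 < nu)
    (hlam : 0 < lam) (hmu : 0 < mu)
    (hq : 0 ≤ q) (hq1 : q ≤ 1)
    (hcond : (lam - mu) * Cb ≥ nu - Cf)
    (v1 v2 u1 u2 : ℝ)
    (hv1 : v1 ∈ Set.Icc (0 : ℝ) 1) (hv2 : v2 ∈ Set.Icc (0 : ℝ) 1)
    (hu1 : u1 ∈ Set.Icc (0 : ℝ) q) (hu2 : u2 ∈ Set.Icc (0 : ℝ) q)
    (h1 : Dfun Cf Cb nu lam mu q u1 v1 = 0)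
    (h2 : Dfun Cf Cb nu lam mu q u2 v2 = 0) :
    |u1 - u2| ≤ |v1 - v2| := by
  obtain ⟨hv1l, hv1r⟩ := hv1
  obtain ⟨hv2l, hv2r⟩ := hv2
  obtain ⟨hu1l, hu1r⟩ := hu1
  obtain ⟨hu2l, hu2r⟩ := hu2
  unfold Dfun at h1 h2
  set A : ℝ := Cf + Cb * lam + nu * v2 with hA
  set B : ℝ := Cb * mu + nu * u1 with hB
  have hApos : 0 < A := by positivity
  have hBpos : 0 ≤ B := by positivity
  have hBA : B ≤ A := by
    have : nu * u1 ≤ nu := by nlinarith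
    nlinarith
  have key : (u1 - u2) * A = -((v1 - v2) * B) := by
    rw [hA, hB]; linear_combination h2 - h1
  have habs : |u1 - u2| * A = |v1 - v2| * B := by
    calc |u1 - u2| * A = |(u1 - u2) * A| := by
          rw [abs_mul, abs_of_pos hApos]
      _ = |(v1 - v2) * B| := by rw [key, abs_neg]
      _ = |v1 - v2| * B := by rw [abs_mul, abs_of_nonneg hBpos]
  nlinarith [abs_nonneg (u1 - u2), abs_nonneg (v1 - v2)]

/-- For each `i ∈ {1,2}`, if `(λ_i − μ_i)·C^b ≥ ν − C_i^f`, then the root of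
`D_i(·, v) = 0` in `[0, q_i]` is 1-Lipschitz in the other flow `v ∈ [0, 1]`. -/
theorem root_one_lipschitz
    (C1f C2f Cb nu lam1 lam2 mu1 mu2 q1 q2 : ℝ)
    (hC1f : 0 < C1f) (hC2f : 0 < C2f) (hCb : 0 < Cb) (hnu : 0 < nu)
    (hlam1 : 0 < lam1) (hlam1' : lam1 ≤ 1) (hlam2 : 0 < lam2) (hlam2' : lam2 ≤ 1)
    (hmu1 : 0 < mu1) (hmu1' : mu1 ≤ 1) (hmu2 : 0 < mu2) (hmu2' : mu2 ≤ 1)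
    (hq1 : 0 ≤ q1) (hq2 : 0 ≤ q2) (hq : q1 + q2 = 1) :
    ((lam1 - mu1) * Cb ≥ nu - C1f →
      ∀ v1 ∈ Set.Icc (0 : ℝ) 1, ∀ v2 ∈ Set.Icc (0 : ℝ) 1,
        ∀ u1 ∈ Set.Icc (0 : ℝ) q1, ∀ u2 ∈ Set.Icc (0 : ℝ) q1,
          Dfun C1f Cb nu lam1 mu1 q1 u1 v1 = 0 → Dfun C1f Cb nu lam1 mu1 q1 u2 v2 = 0 →
            |u1 - u2| ≤ |v1 - v2|) ∧
    ((lam2 - mu2) * Cb ≥ nu - C2f →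
      ∀ v1 ∈ Set.Icc (0 : ℝ) 1, ∀ v2 ∈ Set.Icc (0 : ℝ) 1,
        ∀ u1 ∈ Set.Icc (0 : ℝ) q2, ∀ u2 ∈ Set.Icc (0 : ℝ) q2,
          Dfun C2f Cb nu lam2 mu2 q2 u1 v1 = 0 → Dfun C2f Cb nu lam2 mu2 q2 u2 v2 = 0 →
            |u1 - u2| ≤ |v1 - v2|) := by
  constructor
  · intro hcond v1 hv1 v2 hv2 u1 hu1 u2 hu2 h1 h2
    exact root_one_lipschitz_aux C1f Cb nu lam1 mu1 q1 hC1f hCb hnu hlam1 hmu1 hq1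
      (by linarith) hcond v1 v2 u1 u2 hv1 hv2 hu1 hu2 h1 h2
  · intro hcond v1 hv1 v2 hv2 u1 hu1 u2 hu2 h1 h2
    exact root_one_lipschitz_aux C2f Cb nu lam2 mu2 q2 hC2f hCb hnu hlam2 hmu2 hq2
      (by linarith) hcond v1 v2 u1 u2 hv1 hv2 hu1 hu2 h1 h2
end

section
/- For each i ∈ {1,2}, the best response function is nonincreasing: if 0 ≤ v₁ ≤ v₂ ≤ 1, then B_i(v₂) ≤ B_i(v₁), where B_i(v) denotes the unique minimizer of u ↦ D_i(u, v)² over [0, q_i]. -/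
/-- `b` is the best response for the player with parameters `(Cf, lam, mu, q)` to the
other flow `v`: a minimizer of `u ↦ D(u, v)²` over `[0, q]`. -/
def IsBestResponse (Cf Cb nu lam mu q v b : ℝ) : Prop :=
  b ∈ Set.Icc (0 : ℝ) q ∧
    ∀ u ∈ Set.Icc (0 : ℝ) q,
      (Dfun Cf Cb nu lam mu q b v) ^ 2 ≤ (Dfun Cf Cb nu lam mu q u v) ^ 2

/-- A minimizer of `u ↦ (α - β u)²` over `[0, q]` (with `β > 0`) equals the clamp of `α/β`. -/
lemma clamp_unique (α β q b : ℝ) (hβ : 0 < β) (hq : 0 ≤ q)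
    (hb0 : 0 ≤ b) (hbq : b ≤ q)
    (hmin : ∀ u ∈ Set.Icc (0:ℝ) q, (α - β*b)^2 ≤ (α - β*u)^2) :
    b = max 0 (min q (α/β)) := by
  set c := max 0 (min q (α/β)) with hc
  have hc0 : 0 ≤ c := le_max_left _ _
  have hcq : c ≤ q := max_le hq (min_le_left _ _)
  have hcmin : ∀ u ∈ Set.Icc (0:ℝ) q, (α - β*c)^2 ≤ (α - β*u)^2 := by
    intro u hu
    obtain ⟨hu0, huq⟩ := hu
    rcases le_or_gt (α/β) 0 with h1 | h1
    · have hα : α ≤ 0 := by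
        have := (div_nonpos_iff.mp h1)
        rcases this with ⟨h, _⟩ | ⟨h, h'⟩
        · linarith
        · exact h
      have hcz : c = 0 := by
        rw [hc, max_eq_left]
        exact le_trans (min_le_right _ _) h1
      rw [hcz]
      nlinarith [mul_nonneg hβ.le hu0]
    · rcases le_or_gt (α/β) q with h2 | h2
      · have hceq : c = α/β := by
          rw [hc, min_eq_right h2, max_eq_right h1.le]
        have : α - β*c = 0 := by
          rw [hceq, mul_div_cancel₀ _ (ne_of_gt hβ)]
          ring
        rw [this]
        simpa using sq_nonneg (α - β*u)
      · have hcq' : c = q := by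
          rw [hc, min_eq_left h2.le, max_eq_right hq]
        have hαq : β*q < α := by
          have := (lt_div_iff₀ hβ).mp h2
          nlinarith
        rw [hcq']
        nlinarith [mul_nonneg hβ.le hu0, mul_le_mul_of_nonneg_left huq hβ.le]
  have heq : (α - β*b)^2 = (α - β*c)^2 :=
    le_antisymm (hmin c ⟨hc0, hcq⟩) (hcmin b ⟨hb0, hbq⟩)
  have hfac : (β*(c - b)) * (2*α - β*(b+c)) = 0 := by linear_combination heq
  rcases mul_eq_zero.mp hfac with h | h
  · have : c - b = 0 := by
      rcases mul_eq_zero.mp h with h' | h'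
      · exact absurd h' (ne_of_gt hβ)
      · exact h'
    linarith
  · have hdiv : α/β = (b+c)/2 := by
      field_simp
      linarith
    have hm0 : 0 ≤ α/β := by rw [hdiv]; linarith
    have hmq : α/β ≤ q := by rw [hdiv]; linarith
    have hceq : c = α/β := by rw [hc, min_eq_right hmq, max_eq_right hm0]
    have hzero : α - β*c = 0 := by
      rw [hceq, mul_div_cancel₀ _ (ne_of_gt hβ)]; ring
    have : (α - β*b)^2 = 0 := by rw [heq, hzero]; ring
    have hb : α - β*b = 0 := by
      have := pow_eq_zero_iff (n := 2) (by norm_num) |>.mp this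
      exact this
    have : b = α/β := by field_simp at hb ⊢; linarith
    rw [this, hceq]

/-- Monotonicity of the best response for a single player. -/
lemma br_mono (Cf Cb nu lam mu q : ℝ)
    (hCf : 0 < Cf) (hCb : 0 < Cb) (hnu : 0 < nu) (hlam : 0 < lam)
    (hmu : 0 < mu) (hq : 0 ≤ q) :
    ∀ v1 v2 : ℝ, 0 ≤ v1 → v1 ≤ v2 → v2 ≤ 1 →
      ∀ b1 b2 : ℝ, IsBestResponse Cf Cb nu lam mu q v1 b1 →
        IsBestResponse Cf Cb nu lam mu q v2 b2 → b2 ≤ b1 := by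
  intro v1 v2 hv1 hv12 hv2 b1 b2 hbr1 hbr2
  have hv2' : 0 ≤ v2 := le_trans hv1 hv12
  have hβ1 : 0 < Cf + Cb*lam + nu*v1 := by positivity
  have hβ2 : 0 < Cf + Cb*lam + nu*v2 := by positivity
  have hD : ∀ u v : ℝ, Dfun Cf Cb nu lam mu q u v
      = (Cf*q - Cb*mu*v) - (Cf + Cb*lam + nu*v)*u := by
    intro u v; simp only [Dfun]; ring
  have hb1 : b1 = max 0 (min q ((Cf*q - Cb*mu*v1)/(Cf + Cb*lam + nu*v1))) := by
    apply clamp_unique _ _ _ _ hβ1 hq hbr1.1.1 hbr1.1.2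
    intro u hu
    have := hbr1.2 u hu
    rw [hD, hD] at this
    exact this
  have hb2 : b2 = max 0 (min q ((Cf*q - Cb*mu*v2)/(Cf + Cb*lam + nu*v2))) := by
    apply clamp_unique _ _ _ _ hβ2 hq hbr2.1.1 hbr2.1.2
    intro u hu
    have := hbr2.2 u hu
    rw [hD, hD] at this
    exact this
  have hr : (Cf*q - Cb*mu*v2)/(Cf + Cb*lam + nu*v2)
      ≤ (Cf*q - Cb*mu*v1)/(Cf + Cb*lam + nu*v1) := by
    rw [div_le_div_iff₀ hβ2 hβ1]
    nlinarith [mul_nonneg (mul_pos hCf hnu).le hq, mul_pos hCb hmu,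
      mul_pos (mul_pos hCb hmu) hCf, mul_pos (mul_pos (mul_pos hCb hmu) hCb) hlam]
  rw [hb1, hb2]
  exact max_le_max (le_refl 0) (min_le_min (le_refl q) hr)

/-- For each `i ∈ {1,2}`, the best response function `B_i` (the unique
minimizer of `u ↦ D_i(u, v)²` over `[0, q_i]`) is nonincreasing: if `0 ≤ v₁ ≤ v₂ ≤ 1`
then `B_i(v₂) ≤ B_i(v₁)`. -/
theorem best_response_nonincreasing
    (C1f C2f Cb nu lam1 lam2 mu1 mu2 q1 q2 : ℝ)
    (hC1f : 0 < C1f) (hC2f : 0 < C2f) (hCb : 0 < Cb) (hnu : 0 < nu)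
    (hlam1 : 0 < lam1) (hlam1' : lam1 ≤ 1) (hlam2 : 0 < lam2) (hlam2' : lam2 ≤ 1)
    (hmu1 : 0 < mu1) (hmu1' : mu1 ≤ 1) (hmu2 : 0 < mu2) (hmu2' : mu2 ≤ 1)
    (hq1 : 0 ≤ q1) (hq2 : 0 ≤ q2) (hq : q1 + q2 = 1) :
    (∀ v1 v2 : ℝ, 0 ≤ v1 → v1 ≤ v2 → v2 ≤ 1 →
      ∀ b1 b2 : ℝ, IsBestResponse C1f Cb nu lam1 mu1 q1 v1 b1 →
        IsBestResponse C1f Cb nu lam1 mu1 q1 v2 b2 → b2 ≤ b1) ∧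
    (∀ v1 v2 : ℝ, 0 ≤ v1 → v1 ≤ v2 → v2 ≤ 1 →
      ∀ b1 b2 : ℝ, IsBestResponse C2f Cb nu lam2 mu2 q2 v1 b1 →
        IsBestResponse C2f Cb nu lam2 mu2 q2 v2 b2 → b2 ≤ b1) :=
  ⟨br_mono C1f Cb nu lam1 mu1 q1 hC1f hCb hnu hlam1 hmu1 hq1,
   br_mono C2f Cb nu lam2 mu2 q2 hC2f hCb hnu hlam2 hmu2 hq2⟩
end

section
/- For each i ∈ {1,2}, if (λ_i − μ_i)·C^b ≥ ν − C_i^f, then the best response function B_i is 1-Lipschitz on [0, 1]: for all v₁, v₂ ∈ [0, 1], |B_i(v₁) − B_i(v₂)| ≤ |v₁ − v₂|, where B_i(v) denotes the unique minimizer of u ↦ D_i(u, v)² over [0, q_i]. -/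
/-- min with a fixed first argument is 1-Lipschitz. -/
lemma min_lip (q x y : ℝ) : |min q x - min q y| ≤ |x - y| := by
  have hx : min q x = -(max (-x) (-q)) := by
    rw [max_comm, max_neg_neg, neg_neg]
  have hy : min q y = -(max (-y) (-q)) := by
    rw [max_comm, max_neg_neg, neg_neg]
  calc |min q x - min q y| = |-(max (-x) (-q) - max (-y) (-q))| := by rw [hx, hy]; ring_nf
    _ = |max (-x) (-q) - max (-y) (-q)| := abs_neg _
    _ ≤ |(-x) - (-y)| := abs_max_sub_max_le_abs _ _ _
    _ = |x - y| := by rw [← abs_neg]; ring_nf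

/-- Clamping to `[0,q]` is 1-Lipschitz. -/
lemma clamp_lip (q x y : ℝ) : |max 0 (min q x) - max 0 (min q y)| ≤ |x - y| := by
  calc |max 0 (min q x) - max 0 (min q y)|
      = |max (min q x) 0 - max (min q y) 0| := by rw [max_comm 0, max_comm 0]
    _ ≤ |min q x - min q y| := abs_max_sub_max_le_abs _ _ _
    _ ≤ |x - y| := min_lip q x y

/-- Any best response equals the clamp of the root of the linear function `u ↦ D(u,v)`. -/
lemma br_eq (Cf Cb nu lam mu q v b : ℝ) (hCf : 0 < Cf) (hCb : 0 < Cb) (hnu : 0 < nu)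
    (hlam : 0 < lam) (hq : 0 ≤ q) (hv : 0 ≤ v)
    (hb : IsBestResponse Cf Cb nu lam mu q v b) :
    b = max 0 (min q ((Cf * q - Cb * (mu * v)) / (Cf + Cb * lam + nu * v))) := by
  obtain ⟨⟨hb0, hbq⟩, hmin⟩ := hb
  have hspos : (0:ℝ) < Cf + Cb * lam + nu * v := by positivity
  obtain ⟨s, hs_def⟩ : ∃ s : ℝ, s = Cf + Cb * lam + nu * v := ⟨_, rfl⟩
  obtain ⟨r, hr_def⟩ : ∃ r : ℝ, r = (Cf * q - Cb * (mu * v)) / (Cf + Cb * lam + nu * v) :=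
    ⟨_, rfl⟩
  rw [← hr_def]
  have hs : 0 < s := hs_def ▸ hspos
  have hD : ∀ u : ℝ, Dfun Cf Cb nu lam mu q u v = s * (r - u) := by
    intro u
    rw [hr_def, hs_def]
    unfold Dfun
    field_simp
    ring
  obtain ⟨p, hp_def⟩ : ∃ p : ℝ, p = max 0 (min q r) := ⟨_, rfl⟩
  rw [← hp_def]
  have hp0 : 0 ≤ p := hp_def ▸ le_max_left _ _
  have hpq : p ≤ q := hp_def ▸ max_le hq (min_le_left _ _)
  have hproj : ∀ u, 0 ≤ u → u ≤ q → (r - p) ^ 2 ≤ (r - u) ^ 2 := by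
    intro u hu0 huq
    rcases le_total r 0 with hr | hr
    · have hpe : p = 0 := by
        rw [hp_def, min_eq_right (le_trans hr hq), max_eq_left hr]
      rw [hpe]; nlinarith
    · rcases le_total r q with hrq | hrq
      · have hpe : p = r := by rw [hp_def, min_eq_right hrq, max_eq_right hr]
        rw [hpe]; nlinarith
      · have hpe : p = q := by rw [hp_def, min_eq_left hrq, max_eq_right hq]
        rw [hpe]; nlinarith
  have h1 : (s * (r - b)) ^ 2 ≤ (s * (r - p)) ^ 2 := by
    have := hmin p ⟨hp0, hpq⟩
    rwa [hD, hD] at this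
  have h2 : (r - b) ^ 2 ≤ (r - p) ^ 2 := by
    rw [mul_pow, mul_pow] at h1
    exact le_of_mul_le_mul_left h1 (by positivity)
  have h3 : (r - p) ^ 2 ≤ (r - b) ^ 2 := hproj b hb0 hbq
  have heq : (r - b) ^ 2 = (r - p) ^ 2 := le_antisymm h2 h3
  clear hmin hD hproj h1 h2 h3 hspos hs hs_def hr_def
  rcases le_total r 0 with hr | hr
  · have hpe : p = 0 := by
      rw [hp_def, min_eq_right (le_trans hr hq), max_eq_left hr]
    rw [hpe] at heq ⊢
    nlinarith [heq, mul_nonneg hb0 (neg_nonneg.2 hr), sq_nonneg b]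
  · rcases le_total r q with hrq | hrq
    · have hpe : p = r := by rw [hp_def, min_eq_right hrq, max_eq_right hr]
      rw [hpe] at heq ⊢
      have h0 : (r - b) ^ 2 = 0 := by rw [heq]; ring
      have := sq_eq_zero_iff.mp h0
      linarith
    · have hpe : p = q := by rw [hp_def, min_eq_left hrq, max_eq_right hq]
      rw [hpe] at heq ⊢
      nlinarith [heq, hbq, hrq, sq_nonneg (q - b), mul_nonneg (sub_nonneg.2 hbq) (sub_nonneg.2 hrq)]

/-- The root function is 1-Lipschitz in `v` on `[0,1]` under the stated condition. -/
lemma root_lip (Cf Cb nu lam mu q v1 v2 : ℝ) (hCf : 0 < Cf) (hCb : 0 < Cb) (hnu : 0 < nu)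
    (hlam : 0 < lam) (hmu : 0 < mu) (hq0 : 0 ≤ q) (hq1 : q ≤ 1)
    (hcond : (lam - mu) * Cb ≥ nu - Cf)
    (hv1 : 0 ≤ v1) (hv2 : 0 ≤ v2) :
    |(Cf * q - Cb * (mu * v1)) / (Cf + Cb * lam + nu * v1) -
      (Cf * q - Cb * (mu * v2)) / (Cf + Cb * lam + nu * v2)| ≤ |v1 - v2| := by
  have hs1p : (0:ℝ) < Cf + Cb * lam + nu * v1 := by positivity
  have hs2p : (0:ℝ) < Cf + Cb * lam + nu * v2 := by positivity
  have hApos : (0:ℝ) < Cf + Cb * lam := by positivity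
  obtain ⟨K, hK⟩ : ∃ K : ℝ, K = nu * Cf * q + Cb * mu * (Cf + Cb * lam) := ⟨_, rfl⟩
  have hK0 : 0 ≤ K := by rw [hK]; positivity
  have hdiff : (Cf * q - Cb * (mu * v1)) / (Cf + Cb * lam + nu * v1) -
      (Cf * q - Cb * (mu * v2)) / (Cf + Cb * lam + nu * v2)
      = (v2 - v1) * K / ((Cf + Cb * lam + nu * v1) * (Cf + Cb * lam + nu * v2)) := by
    rw [hK]
    field_simp
    ring
  have h1 : nu ≤ Cf + Cb * lam - Cb * mu := by linarith
  have h2 : (Cf + Cb * lam) * nu ≤ (Cf + Cb * lam) * (Cf + Cb * lam - Cb * mu) :=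
    mul_le_mul_of_nonneg_left h1 hApos.le
  have h3 : Cf * nu ≤ (Cf + Cb * lam) * nu := by nlinarith [mul_pos (mul_pos hCb hlam) hnu]
  have h4 : Cf * nu * q ≤ Cf * nu := by nlinarith [mul_pos hCf hnu]
  have h5 : K ≤ (Cf + Cb * lam) * (Cf + Cb * lam) := by rw [hK]; nlinarith
  have h6 : (Cf + Cb * lam) * (Cf + Cb * lam) ≤
      (Cf + Cb * lam + nu * v1) * (Cf + Cb * lam + nu * v2) := by
    have e1 : 0 ≤ nu * v1 * (Cf + Cb * lam) := by positivity
    have e2 : 0 ≤ nu * v2 * (Cf + Cb * lam) := by positivity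
    have e3 : 0 ≤ (nu * v1) * (nu * v2) := by positivity
    nlinarith
  have hKle : K ≤ (Cf + Cb * lam + nu * v1) * (Cf + Cb * lam + nu * v2) := le_trans h5 h6
  rw [hdiff, abs_div, abs_mul]
  rw [abs_of_pos (by positivity : (0:ℝ) < (Cf + Cb * lam + nu * v1) * (Cf + Cb * lam + nu * v2)),
    abs_of_nonneg hK0]
  rw [div_le_iff₀ (by positivity)]
  rw [abs_sub_comm v2 v1]
  nlinarith [abs_nonneg (v1 - v2)]

/-- The key one-player Lipschitz lemma. -/
lemma one_player (Cf Cb nu lam mu q : ℝ) (hCf : 0 < Cf) (hCb : 0 < Cb) (hnu : 0 < nu)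
    (hlam : 0 < lam) (hmu : 0 < mu) (hq0 : 0 ≤ q) (hq1 : q ≤ 1)
    (hcond : (lam - mu) * Cb ≥ nu - Cf) :
    ∀ v1 ∈ Set.Icc (0 : ℝ) 1, ∀ v2 ∈ Set.Icc (0 : ℝ) 1,
      ∀ b1 b2 : ℝ, IsBestResponse Cf Cb nu lam mu q v1 b1 →
        IsBestResponse Cf Cb nu lam mu q v2 b2 → |b1 - b2| ≤ |v1 - v2| := by
  intro v1 hv1 v2 hv2 b1 b2 hb1 hb2
  rw [br_eq Cf Cb nu lam mu q v1 b1 hCf hCb hnu hlam hq0 hv1.1 hb1,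
    br_eq Cf Cb nu lam mu q v2 b2 hCf hCb hnu hlam hq0 hv2.1 hb2]
  calc _ ≤ |(Cf * q - Cb * (mu * v1)) / (Cf + Cb * lam + nu * v1) -
      (Cf * q - Cb * (mu * v2)) / (Cf + Cb * lam + nu * v2)| := clamp_lip _ _ _
    _ ≤ |v1 - v2| := root_lip Cf Cb nu lam mu q v1 v2 hCf hCb hnu hlam hmu hq0 hq1 hcond
        hv1.1 hv2.1

/-- For each `i ∈ {1,2}`, if `(λ_i − μ_i)·C^b ≥ ν − C_i^f`, then the best
response function `B_i` (the unique minimizer of `u ↦ D_i(u, v)²` over `[0, q_i]`) is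
1-Lipschitz on `[0, 1]`: `|B_i(v₁) − B_i(v₂)| ≤ |v₁ − v₂|`. -/
theorem best_response_one_lipschitz
    (C1f C2f Cb nu lam1 lam2 mu1 mu2 q1 q2 : ℝ)
    (hC1f : 0 < C1f) (hC2f : 0 < C2f) (hCb : 0 < Cb) (hnu : 0 < nu)
    (hlam1 : 0 < lam1) (hlam1' : lam1 ≤ 1) (hlam2 : 0 < lam2) (hlam2' : lam2 ≤ 1)
    (hmu1 : 0 < mu1) (hmu1' : mu1 ≤ 1) (hmu2 : 0 < mu2) (hmu2' : mu2 ≤ 1)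
    (hq1 : 0 ≤ q1) (hq2 : 0 ≤ q2) (hq : q1 + q2 = 1) :
    ((lam1 - mu1) * Cb ≥ nu - C1f →
      ∀ v1 ∈ Set.Icc (0 : ℝ) 1, ∀ v2 ∈ Set.Icc (0 : ℝ) 1,
        ∀ b1 b2 : ℝ, IsBestResponse C1f Cb nu lam1 mu1 q1 v1 b1 →
          IsBestResponse C1f Cb nu lam1 mu1 q1 v2 b2 → |b1 - b2| ≤ |v1 - v2|) ∧
    ((lam2 - mu2) * Cb ≥ nu - C2f →
      ∀ v1 ∈ Set.Icc (0 : ℝ) 1, ∀ v2 ∈ Set.Icc (0 : ℝ) 1,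
        ∀ b1 b2 : ℝ, IsBestResponse C2f Cb nu lam2 mu2 q2 v1 b1 →
          IsBestResponse C2f Cb nu lam2 mu2 q2 v2 b2 → |b1 - b2| ≤ |v1 - v2|) := by
  constructor
  · intro hcond
    exact one_player C1f Cb nu lam1 mu1 q1 hC1f hCb hnu hlam1 hmu1 hq1 (by linarith) hcond
  · intro hcond
    exact one_player C2f Cb nu lam2 mu2 q2 hC2f hCb hnu hlam2 hmu2 hq2 (by linarith) hcond
end
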